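/- arXiv:1902.02363 — 13 statements merged into one kernel-verified Lean document; each statement's English description precedes it below -/
import Mathlib

section
/- Let (X,d) be a pseudo-distance space and let f : X → ℝ be uniformly continuous on (X,d). Then the supremum operator SUP_f is uniformly continuous on (dom(SUP_f), D_H): for every ε > 0 there exists δ > 0 such that for all nonempty subsets A, A' of X with SUP_f(A) ∈ ℝ, SUP_f(A') ∈ ℝ and D_H(A,A') < δ, one has |SUP_f(A) − SUP_f(A')| < ε. -/
/-- The distance from a point to a set, induced by an arbitrary
pseudo-distance `d : X → X → EReal`. -/
noncomputable def distSet {X : Type*} (d : X → X → EReal) (x : X) (A : Set X) : EReal :=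
  ⨅ a ∈ A, d x a

/-- The asymmetric Hausdorff distance induced by `d`. -/
noncomputable def DasyH {X : Type*} (d : X → X → EReal) (A A' : Set X) : EReal :=
  ⨆ a ∈ A, distSet d a A'

/-- The (symmetric) Hausdorff distance induced by `d`. -/
noncomputable def DH {X : Type*} (d : X → X → EReal) (A A' : Set X) : EReal :=
  max (DasyH d A A') (DasyH d A' A)

/-- The supremum operator `SUP_f`. -/
noncomputable def SUPf {X : Type*} (f : X → ℝ) (A : Set X) : EReal :=
  ⨆ a ∈ A, (f a : EReal)


lemma supf_key {X : Type*} (d : X → X → EReal) (f : X → ℝ) (ε δ : ℝ)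
    (hδ : ∀ x y : X, d x y < (δ : EReal) → |f x - f y| < ε)
    (A A' : Set X) (r r' : ℝ) (hA : SUPf f A = (r : EReal))
    (hA' : SUPf f A' = (r' : EReal)) (h : DasyH d A A' < (δ : EReal)) :
    r ≤ r' + ε := by
  rw [← EReal.coe_le_coe_iff, ← hA]
  apply iSup₂_le
  intro a ha
  have h1 : distSet d a A' < (δ : EReal) :=
    lt_of_le_of_lt (le_iSup₂ (f := fun a _ => distSet d a A') a ha) h
  rw [distSet] at h1
  obtain ⟨a', h1'⟩ := iInf_lt_iff.mp h1
  obtain ⟨ha', hd⟩ := iInf_lt_iff.mp h1'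
  have h2 : |f a - f a'| < ε := hδ a a' hd
  have h3 : (f a' : EReal) ≤ (r' : EReal) := hA' ▸ le_iSup₂ (f := fun a _ => ((f a : ℝ) : EReal)) a' ha'
  rw [EReal.coe_le_coe_iff] at h3
  have := abs_lt.mp h2
  exact_mod_cast by linarith [this.1, this.2]

/-- **Stability of the optimal values, finite case, supremum, uniform continuity.**
If `f : X → ℝ` is uniformly continuous on the pseudo-distance space `(X, d)`, then
`SUP_f` is uniformly continuous on `(dom(SUP_f), D_H)`. -/
theorem supf_uniformly_continuous {X : Type*} [Nonempty X] (d : X → X → EReal) (f : X → ℝ)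
    (hf : ∀ ε : ℝ, 0 < ε → ∃ δ : ℝ, 0 < δ ∧
      ∀ x y : X, d x y < (δ : EReal) → |f x - f y| < ε) :
    ∀ ε : ℝ, 0 < ε → ∃ δ : ℝ, 0 < δ ∧
      ∀ A A' : Set X, A.Nonempty → A'.Nonempty →
        ∀ r r' : ℝ, SUPf f A = (r : EReal) → SUPf f A' = (r' : EReal) →
          DH d A A' < (δ : EReal) → |r - r'| < ε := by
  intro ε hε
  obtain ⟨δ, hδ0, hδ⟩ := hf (ε / 2) (by linarith)
  refine ⟨δ, hδ0, ?_⟩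
  intro A A' _ _ r r' hA hA' hDH
  rw [DH] at hDH
  have h1 : DasyH d A A' < (δ : EReal) := lt_of_le_of_lt (le_max_left _ _) hDH
  have h2 : DasyH d A' A < (δ : EReal) := lt_of_le_of_lt (le_max_right _ _) hDH
  have k1 := supf_key d f (ε / 2) δ hδ A A' r r' hA hA' h1
  have k2 := supf_key d f (ε / 2) δ hδ A' A r' r hA' hA h2
  rw [abs_lt]
  constructor <;> linarith
end

section
/- Let (X,d) be a pseudo-distance space and let f : X → ℝ be uniformly continuous on (X,d). Then the infimum operator INF_f is uniformly continuous on (dom(INF_f), D_H): for every ε > 0 there exists δ > 0 such that for all nonempty subsets A, A' of X with INF_f(A) ∈ ℝ, INF_f(A') ∈ ℝ and D_H(A,A') < δ, one has |INF_f(A) − INF_f(A')| < ε. -/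
/-- The infimum operator `INF_f`. -/
noncomputable def INFf {X : Type*} (f : X → ℝ) (A : Set X) : EReal :=
  ⨅ a ∈ A, (f a : EReal)

lemma inff_aux {X : Type*} (d : X → X → EReal) (f : X → ℝ) (δ ε : ℝ)
    (hδε : ∀ x y : X, d x y < (δ : EReal) → |f x - f y| < ε)
    (A A' : Set X) (r r' : ℝ) (hr : INFf f A = (r : EReal)) (hr' : INFf f A' = (r' : EReal))
    (h : DasyH d A A' < (δ : EReal)) : r' ≤ r + ε := by
  have key : ∀ a ∈ A, ((r' - ε : ℝ) : EReal) ≤ (f a : EReal) := by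
    intro a ha
    have h1 : distSet d a A' < (δ : EReal) :=
      lt_of_le_of_lt (le_iSup₂ (f := fun a _ => distSet d a A') a ha) h
    rw [distSet, iInf_lt_iff] at h1
    obtain ⟨a', h1⟩ := h1
    rw [iInf_lt_iff] at h1
    obtain ⟨ha', h1⟩ := h1
    have h2 : |f a - f a'| < ε := hδε a a' h1
    have h3 : (r' : EReal) ≤ (f a' : EReal) := by
      rw [← hr']; exact iInf₂_le a' ha'
    rw [EReal.coe_le_coe_iff] at h3
    rw [abs_sub_lt_iff] at h2
    exact_mod_cast (by linarith : (r' - ε : ℝ) ≤ f a)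
  have h4 : ((r' - ε : ℝ) : EReal) ≤ INFf f A := le_iInf₂ key
  rw [hr, EReal.coe_le_coe_iff] at h4
  linarith

/-- **Stability of the optimal values, finite case, infimum, uniform continuity.**
If `f : X → ℝ` is uniformly continuous on the pseudo-distance space `(X, d)`, then
`INF_f` is uniformly continuous on `(dom(INF_f), D_H)`. -/
theorem inff_uniformly_continuous {X : Type*} [Nonempty X] (d : X → X → EReal) (f : X → ℝ)
    (hf : ∀ ε : ℝ, 0 < ε → ∃ δ : ℝ, 0 < δ ∧
      ∀ x y : X, d x y < (δ : EReal) → |f x - f y| < ε) :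
    ∀ ε : ℝ, 0 < ε → ∃ δ : ℝ, 0 < δ ∧
      ∀ A A' : Set X, A.Nonempty → A'.Nonempty →
        ∀ r r' : ℝ, INFf f A = (r : EReal) → INFf f A' = (r' : EReal) →
          DH d A A' < (δ : EReal) → |r - r'| < ε := by
  intro ε hε
  obtain ⟨δ, hδ, hδε⟩ := hf (ε / 2) (by linarith)
  refine ⟨δ, hδ, ?_⟩
  intro A A' _ _ r r' hr hr' hDH
  rw [DH, max_lt_iff] at hDH
  have h1 := inff_aux d f δ (ε / 2) hδε A A' r r' hr hr' hDH.1
  have h2 := inff_aux d f δ (ε / 2) hδε A' A r' r hr' hr hDH.2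
  rw [abs_sub_lt_iff]
  constructor <;> linarith
end

section
/- Let (X,d) be a pseudo-distance space and let f : X → ℝ be Λ-Lipschitz continuous on (X,d) for some Λ > 0. Then SUP_f is Λ-Lipschitz continuous on (dom(SUP_f), D_H): for all nonempty subsets A, A' of X with SUP_f(A) ∈ ℝ and SUP_f(A') ∈ ℝ, one has |SUP_f(A) − SUP_f(A')| ≤ Λ·D_H(A,A'), where the inequality is understood in [-∞,∞]. -/
lemma supf_aux {X : Type*} (d : X → X → EReal) (f : X → ℝ) (Λ : ℝ) (hΛ : 0 < Λ)
    (hf : ∀ x y : X, ((|f x - f y| : ℝ) : EReal) ≤ (Λ : EReal) * d x y)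
    (A A' : Set X) (r r' : ℝ) (hr : SUPf f A = (r : EReal)) (hr' : SUPf f A' = (r' : EReal)) :
    (((r - r') / Λ : ℝ) : EReal) ≤ DasyH d A A' := by
  rw [← EReal.le_of_forall_lt_iff_le]
  intro z hz
  have key : ∀ a ∈ A, f a ≤ r' + Λ * z := by
    intro a ha
    have h1 : distSet d a A' < (z : EReal) :=
      lt_of_le_of_lt (le_iSup₂ (f := fun a _ => distSet d a A') a ha) hz
    obtain ⟨a', ha', hd⟩ : ∃ a' ∈ A', d a a' < (z : EReal) := by
      simpa [distSet, iInf_lt_iff] using h1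
    have h2 : ((f a - f a' : ℝ) : EReal) / (Λ : EReal) ≤ d a a' := by
      rw [EReal.div_le_iff_le_mul (by exact_mod_cast hΛ) (by simp)]
      exact le_trans (by exact_mod_cast le_abs_self (f a - f a')) (hf a a')
    have h3 : (f a - f a') / Λ < z := by
      have h := lt_of_le_of_lt h2 hd
      rw [← EReal.coe_div] at h
      exact_mod_cast h
    have h4 : f a' ≤ r' := by
      have h := le_iSup₂ (f := fun (a : X) (_ : a ∈ A') => ((f a : ℝ) : EReal)) a' ha'
      rw [show (⨆ a ∈ A', ((f a : ℝ) : EReal)) = SUPf f A' from rfl, hr'] at h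
      exact_mod_cast h
    have h5 : f a - f a' < Λ * z := by
      have := (div_lt_iff₀ hΛ).mp h3
      linarith [this]
    linarith
  have hrz : r ≤ r' + Λ * z := by
    have h : SUPf f A ≤ ((r' + Λ * z : ℝ) : EReal) :=
      iSup₂_le fun a ha => EReal.coe_le_coe_iff.2 (key a ha)
    rw [hr] at h
    exact_mod_cast h
  exact_mod_cast EReal.coe_le_coe_iff.2 ((div_le_iff₀ hΛ).2 (by nlinarith))


/-- **Stability of the optimal values, finite case, supremum, Lipschitz continuity.**
If `f : X → ℝ` is `Λ`-Lipschitz continuous on the pseudo-distance space `(X, d)` for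
some `Λ > 0`, then `SUP_f` is `Λ`-Lipschitz continuous on `(dom(SUP_f), D_H)`. -/
theorem supf_lipschitz {X : Type*} [Nonempty X] (d : X → X → EReal) (f : X → ℝ)
    (Λ : ℝ) (hΛ : 0 < Λ)
    (hf : ∀ x y : X, ((|f x - f y| : ℝ) : EReal) ≤ (Λ : EReal) * d x y) :
    ∀ A A' : Set X, A.Nonempty → A'.Nonempty →
      ∀ r r' : ℝ, SUPf f A = (r : EReal) → SUPf f A' = (r' : EReal) →
        ((|r - r'| : ℝ) : EReal) ≤ (Λ : EReal) * DH d A A' := by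
  intro A A' _ _ r r' hr hr'
  rw [← EReal.div_le_iff_le_mul (by exact_mod_cast hΛ) (by simp), ← EReal.coe_div]
  rcases le_total r r' with h | h
  · rw [abs_of_nonpos (by linarith), neg_sub]
    exact le_trans (supf_aux d f Λ hΛ
      hf A' A r' r hr' hr)
      (le_max_right _ _)
  · rw [abs_of_nonneg (by linarith)]
    exact le_trans (supf_aux d f Λ hΛ hf A A' r r' hr hr') (le_max_left _ _)
end

section
/- Let (X,d) be a pseudo-distance space and let f : X → ℝ be continuous at every point of X. Let A ⊆ X be nonempty with SUP_f(A) = ∞. Then for every μ ∈ ℝ there exists δ > 0 such that every nonempty subset A' ⊆ X satisfying D_asyH(A,A') < δ (in particular, every nonempty A' with D_H(A,A') < δ) satisfies μ < SUP_f(A'), i.e., there exists a' ∈ A' with μ < f(a'). -/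
/-- **Stability of the optimal values, infinite case, supremum.**
If `f : X → ℝ` is continuous at every point of the pseudo-distance space `(X, d)` and
`SUP_f(A) = ∞` for a nonempty `A ⊆ X`, then for every `μ ∈ ℝ` there is `δ > 0` such that
every nonempty `A' ⊆ X` with `D_asyH(A, A') < δ` satisfies `μ < SUP_f(A')`, i.e.,
there exists `a' ∈ A'` with `μ < f a'`. -/
theorem supf_stability_infinite {X : Type*} [Nonempty X] (d : X → X → EReal) (f : X → ℝ)
    (hf : ∀ x : X, ∀ ε : ℝ, 0 < ε → ∃ δ : ℝ, 0 < δ ∧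
      ∀ y : X, d x y < (δ : EReal) → |f x - f y| < ε)
    (A : Set X) (hA : A.Nonempty) (hsup : SUPf f A = ⊤) :
    ∀ μ : ℝ, ∃ δ : ℝ, 0 < δ ∧
      ∀ A' : Set X, A'.Nonempty → DasyH d A A' < (δ : EReal) →
        (μ : EReal) < SUPf f A' ∧ ∃ a' ∈ A', μ < f a' := by
  intro μ
  -- pick a ∈ A with μ + 1 < f a
  have h1 : ((μ + 1 : ℝ) : EReal) < SUPf f A := by
    rw [hsup]; exact EReal.coe_lt_top _
  rw [SUPf, lt_iSup_iff] at h1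
  obtain ⟨a, ha⟩ := h1
  rw [lt_iSup_iff] at ha
  obtain ⟨haA, ha⟩ := ha
  have hfa : μ + 1 < f a := by exact_mod_cast ha
  obtain ⟨δ, hδ, hδf⟩ := hf a 1 one_pos
  refine ⟨δ, hδ, fun A' hA' hD => ?_⟩
  -- distSet d a A' < δ
  have hd : distSet d a A' < (δ : EReal) := by
    refine lt_of_le_of_lt ?_ hD
    exact le_iSup₂ (f := fun a _ => distSet d a A') a haA
  rw [distSet, iInf_lt_iff] at hd
  obtain ⟨a', hd⟩ := hd
  rw [iInf_lt_iff] at hd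
  obtain ⟨ha'A, hd⟩ := hd
  have h2 : |f a - f a'| < 1 := hδf a' hd
  have h3 : μ < f a' := by
    have := abs_lt.mp h2
    linarith [this.1]
  refine ⟨?_, a', ha'A, h3⟩
  calc (μ : EReal) < (f a' : EReal) := by exact_mod_cast h3
    _ ≤ SUPf f A' := le_iSup₂ (f := fun x _ => ((f x : EReal))) a' ha'A
end

section
/- Let (X,d) be a pseudo-distance space, let f : X → ℝ be uniformly continuous on (X,d), let ε > 0, and let δ > 0 be such that |f(x) − f(y)| < ε for all x,y ∈ X with d(x,y) < δ. If A ⊆ X is nonempty with SUP_f(A) ∈ ℝ and A' ⊆ X is nonempty with D_H(A,A') < δ, then SUP_f(A') ∈ ℝ and moreover SUP_f(A') ≤ SUP_f(A) + ε. -/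
section PseudoDistance

variable {X : Type*} {d : X → X → EReal} {f : X → ℝ} {A A' : Set X}

theorem exists_lt_of_distSet_lt {x : X} {c : EReal} (h : distSet d x A < c) :
    ∃ a ∈ A, d x a < c := by
  simpa only [distSet, iInf_lt_iff, exists_prop] using h

theorem distSet_le_DasyH {a : X} (ha : a ∈ A) : distSet d a A' ≤ DasyH d A A' :=
  le_iSup₂ (f := fun a _ => distSet d a A') a ha

theorem DasyH_le_DH_symm : DasyH d A' A ≤ DH d A A' :=
  le_max_right _ _

theorem le_SUPf {a : X} (ha : a ∈ A) : (f a : EReal) ≤ SUPf f A :=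
  le_iSup₂ (f := fun a _ => (f a : EReal)) a ha

theorem exists_SUPf_eq_coe_of_le (hA : A.Nonempty) {s : ℝ} (hs : SUPf f A ≤ s) :
    ∃ r : ℝ, SUPf f A = r ∧ r ≤ s := by
  obtain ⟨a, ha⟩ := hA
  have hne_bot : SUPf f A ≠ ⊥ := ne_bot_of_le_ne_bot (EReal.coe_ne_bot _) (le_SUPf ha)
  have hne_top : SUPf f A ≠ ⊤ := ne_top_of_le_ne_top (EReal.coe_ne_top s) hs
  refine ⟨(SUPf f A).toReal, (EReal.coe_toReal hne_top hne_bot).symm, ?_⟩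
  simpa using EReal.toReal_le_toReal hs hne_bot (EReal.coe_ne_top s)

/-- Every point of `A'` is `δ`-close to a point of `A`, where `f` is at most `r`. -/
theorem SUPf_le_of_DasyH_lt {δ : EReal} {ε r : ℝ} (h : ∀ x y, d x y < δ → f x < f y + ε)
    (hr : SUPf f A ≤ r) (hd : DasyH d A' A < δ) : SUPf f A' ≤ ((r + ε : ℝ) : EReal) := by
  refine iSup₂_le fun a' ha' => ?_
  obtain ⟨a, ha, hda⟩ := exists_lt_of_distSet_lt ((distSet_le_DasyH ha').trans_lt hd)
  have hfa : f a ≤ r := EReal.coe_le_coe_iff.1 ((le_SUPf ha).trans hr)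
  exact EReal.coe_le_coe_iff.2 (by linarith [h a' a hda])

end PseudoDistance

theorem supf_dom_stable_general {X : Type*} (d : X → X → EReal) (f : X → ℝ)
    (ε δ : ℝ)
    (h : ∀ x y : X, d x y < (δ : EReal) → |f x - f y| < ε)
    (A A' : Set X) (hA' : A'.Nonempty)
    (r : ℝ) (hr : SUPf f A = (r : EReal)) (hd : DH d A A' < (δ : EReal)) :
    ∃ r' : ℝ, SUPf f A' = (r' : EReal) ∧ r' ≤ r + ε := by
  have hclose : ∀ x y, d x y < δ → f x < f y + ε := fun x y hxy => by
    linarith [(abs_lt.1 (h x y hxy)).2]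
  exact exists_SUPf_eq_coe_of_le hA'
    (SUPf_le_of_DasyH_lt hclose hr.le (DasyH_le_DH_symm.trans_lt hd))

/-- If `f` is uniformly continuous on the pseudo-distance space `(X, d)`, `ε > 0` and
`δ > 0` is such that `|f x − f y| < ε` whenever `d x y < δ`, and if `A` is nonempty with
`SUP_f(A) ∈ ℝ` while `A'` is nonempty with `D_H(A, A') < δ`, then `SUP_f(A') ∈ ℝ` and
`SUP_f(A') ≤ SUP_f(A) + ε`. -/
theorem supf_dom_stable {X : Type*} [Nonempty X] (d : X → X → EReal) (f : X → ℝ)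
    (hf : ∀ ε : ℝ, 0 < ε → ∃ δ : ℝ, 0 < δ ∧
      ∀ x y : X, d x y < (δ : EReal) → |f x - f y| < ε)
    (ε δ : ℝ) (hε : 0 < ε) (hδ : 0 < δ)
    (h : ∀ x y : X, d x y < (δ : EReal) → |f x - f y| < ε)
    (A A' : Set X) (hA : A.Nonempty) (hA' : A'.Nonempty)
    (r : ℝ) (hr : SUPf f A = (r : EReal)) (hd : DH d A A' < (δ : EReal)) :
    ∃ r' : ℝ, SUPf f A' = (r' : EReal) ∧ r' ≤ r + ε :=
  supf_dom_stable_general d f ε δ h A A' hA' r hr hd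
end

section
/- (A general variant of Hoffman's Lemma.) Let X be a commutative additive group, let 𝒮_X : X → [-∞,∞], and let d(u,v) := 𝒮_X(u−v) for u,v ∈ X. Let Y be an additive group and let L : X → Y be additive (L(u+v) = L(u)+L(v) for all u,v ∈ X). Let Ỹ be an additive subgroup of Y containing the range I := L(X), and let L̃ : Ỹ → X be an extended generalized inverse of L: for every t ∈ L(X) there exist v ∈ X and a₀ ∈ X with L(a₀) = 0, L(v) = t and L̃(t) = v + a₀. Suppose L̃ is α-Lipschitz continuous from (Ỹ,𝒮_Ỹ) to (X,𝒮_X) for some real α ≠ 0 (α = 0 allowed if 𝒮_Ỹ is real-valued), i.e., 𝒮_X(L̃(s) − L̃(t)) ≤ α·𝒮_Ỹ(s−t) for all s,t ∈ Ỹ, where 𝒮_Ỹ : Ỹ → [-∞,∞]. For t ∈ I set A_t := {x ∈ X : L(x) = t}. Then for all s,t ∈ I, the Hausdorff distance induced by d satisfies D_H(A_s,A_t) ≤ max{α·𝒮_Ỹ(s−t), α·𝒮_Ỹ(t−s)}. -/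
/-!
Fibers of an additive map are cosets of its kernel, so translating by
`Lt s - Lt t` carries `A_s` into `A_t` (because `L ∘ Lt` is the identity on the range
of `L`), and a translation-invariant distance moves every point of `A_s` by exactly
`SX (Lt s - Lt t) ≤ α · SY (s - t)`.
-/

theorem DasyH_le_of_forall_exists {X : Type*} (d : X → X → EReal) {A A' : Set X} {c : EReal}
    (h : ∀ a ∈ A, ∃ b ∈ A', d a b ≤ c) : DasyH d A A' ≤ c := by
  refine iSup₂_le fun a ha => ?_
  obtain ⟨b, hb, hab⟩ := h a ha
  exact (iInf₂_le b hb).trans hab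

theorem DasyH_sub_le_of_sub_mem {X : Type*} [AddCommGroup X] (S : X → EReal) {A A' : Set X}
    (c : X) (h : ∀ a ∈ A, a - c ∈ A') : DasyH (fun u v => S (u - v)) A A' ≤ S c :=
  DasyH_le_of_forall_exists _ fun a ha => ⟨a - c, h a ha, by rw [sub_sub_cancel]⟩

def IsExtGenInverse {X Y : Type*} [AddZeroClass X] [AddZeroClass Y] (L : X →+ Y)
    (Lt : Y → X) : Prop :=
  ∀ x, ∃ v a₀, L a₀ = 0 ∧ L v = L x ∧ Lt (L x) = v + a₀

theorem IsExtGenInverse.map_apply_map {X Y : Type*} [AddZeroClass X] [AddZeroClass Y]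
    {L : X →+ Y} {Lt : Y → X} (h : IsExtGenInverse L Lt) (x : X) : L (Lt (L x)) = L x := by
  obtain ⟨v, a₀, ha₀, hv, hLt⟩ := h x
  rw [hLt, map_add, ha₀, add_zero, hv]

theorem IsExtGenInverse.DasyH_fiber_le {X Y : Type*} [AddCommGroup X] [AddGroup Y]
    (S : X → EReal) {L : X →+ Y} {Lt : Y → X} (h : IsExtGenInverse L Lt) (x y : X) :
    DasyH (fun u v => S (u - v)) {z | L z = L x} {z | L z = L y}
      ≤ S (Lt (L x) - Lt (L y)) := by
  refine DasyH_sub_le_of_sub_mem S _ fun a (ha : L a = L x) => ?_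
  show L (a - (Lt (L x) - Lt (L y))) = L y
  rw [← sub_add, map_add, map_sub, ha, h.map_apply_map, h.map_apply_map, sub_self, zero_add]

theorem hoffman_general_general {X Y : Type*} [AddCommGroup X] [AddGroup Y]
    (SX : X → EReal) (SY : Y → EReal)
    (L : X → Y) (hL : ∀ u v : X, L (u + v) = L u + L v)
    (Ytil : AddSubgroup Y) (hrange : ∀ x : X, L x ∈ Ytil)
    (Lt : Y → X)
    (hEGI : ∀ x : X, ∃ v a₀ : X, L a₀ = 0 ∧ L v = L x ∧ Lt (L x) = v + a₀)
    (α : ℝ)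
    (hLip : ∀ s ∈ Ytil, ∀ t ∈ Ytil, SX (Lt s - Lt t) ≤ (α : EReal) * SY (s - t)) :
    ∀ x y : X,
      DH (fun u v : X => SX (u - v)) {z : X | L z = L x} {z : X | L z = L y}
        ≤ max ((α : EReal) * SY (L x - L y)) ((α : EReal) * SY (L y - L x)) := by
  have hEGI' : IsExtGenInverse (AddMonoidHom.mk' L hL) Lt := hEGI
  have key : ∀ x y : X,
      DasyH (fun u v : X => SX (u - v)) {z : X | L z = L x} {z : X | L z = L y}
        ≤ (α : EReal) * SY (L x - L y) := fun x y =>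
    (hEGI'.DasyH_fiber_le SX x y).trans (hLip _ (hrange x) _ (hrange y))
  exact fun x y => max_le_max (key x y) (key y x)

/-- **A general variant of Hoffman's Lemma.**
Let `X` be a commutative additive group with pseudo-magnitude `SX` inducing the
pseudo-distance `d u v := SX (u - v)`, let `Y` be an additive group, `L : X → Y`
additive, `Ytil` an additive subgroup of `Y` containing the range of `L`, and let
`Lt` be an extended generalized inverse of `L` which is `α`-Lipschitz continuous from
`(Ytil, SY)` to `(X, SX)`. Then for the fibers `A_t := {x | L x = t}`, `t ∈ L(X)`,
one has `D_H(A_s, A_t) ≤ max (α·SY (s - t)) (α·SY (t - s))`. -/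
theorem hoffman_general {X Y : Type*} [AddCommGroup X] [AddGroup Y]
    (SX : X → EReal) (SY : Y → EReal)
    (L : X → Y) (hL : ∀ u v : X, L (u + v) = L u + L v)
    (Ytil : AddSubgroup Y) (hrange : ∀ x : X, L x ∈ Ytil)
    (Lt : Y → X)
    (hEGI : ∀ x : X, ∃ v a₀ : X, L a₀ = 0 ∧ L v = L x ∧ Lt (L x) = v + a₀)
    (α : ℝ)
    (hα : α ≠ 0 ∨ ∀ y ∈ Ytil, ∃ r : ℝ, SY y = (r : EReal))
    (hLip : ∀ s ∈ Ytil, ∀ t ∈ Ytil, SX (Lt s - Lt t) ≤ (α : EReal) * SY (s - t)) :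
    ∀ x y : X,
      DH (fun u v : X => SX (u - v)) {z : X | L z = L x} {z : X | L z = L y}
        ≤ max ((α : EReal) * SY (L x - L y)) ((α : EReal) * SY (L y - L x)) :=
  hoffman_general_general SX SY L hL Ytil hrange Lt hEGI α hLip
end

section
/- (A further generalization of Hoffman's Lemma.) Let X be a commutative additive group, let 𝒮_X : X → [-∞,∞], and let d(u,v) := 𝒮_X(u−v) for u,v ∈ X. Let Y be an additive group and let L : X → Y be additive. Let L̃ be defined on the range I := L(X) with values in X, and suppose L̃ is an extended generalized inverse of L: for every t ∈ L(X) there exist v ∈ X and a₀ ∈ X with L(a₀) = 0, L(v) = t and L̃(t) = v + a₀. Suppose there is a function ν : I × I → [-∞,∞] such that 𝒮_X(L̃(s) − L̃(t)) ≤ ν(s,t) for all s,t ∈ I. For t ∈ I set A_t := {x ∈ X : L(x) = t}. Then for all s,t ∈ I, the Hausdorff distance induced by d satisfies D_H(A_s,A_t) ≤ max{ν(s,t), ν(t,s)}. -/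
/-- **A further generalization of Hoffman's Lemma.**
Let `X` be a commutative additive group with pseudo-magnitude `SX` inducing the
pseudo-distance `d u v := SX (u - v)`, let `Y` be an additive group, `L : X → Y`
additive, and let `Lt` be an extended generalized inverse of `L` defined on the range
`I := L(X)`. If `ν : I × I → [-∞, ∞]` satisfies `SX (Lt s - Lt t) ≤ ν s t` for all
`s, t ∈ I`, then for the fibers `A_t := {x | L x = t}`, `t ∈ I`, one has
`D_H(A_s, A_t) ≤ max (ν s t) (ν t s)`. -/
theorem hoffman_further_general {X Y : Type*} [AddCommGroup X] [AddGroup Y]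
    (SX : X → EReal)
    (L : X → Y) (hL : ∀ u v : X, L (u + v) = L u + L v)
    (Lt : Y → X)
    (hEGI : ∀ x : X, ∃ v a₀ : X, L a₀ = 0 ∧ L v = L x ∧ Lt (L x) = v + a₀)
    (ν : Y → Y → EReal)
    (hν : ∀ x y : X, SX (Lt (L x) - Lt (L y)) ≤ ν (L x) (L y)) :
    ∀ x y : X,
      DH (fun u v : X => SX (u - v)) {z : X | L z = L x} {z : X | L z = L y}
        ≤ max (ν (L x) (L y)) (ν (L y) (L x)) := by
  have hsub : ∀ u v : X, L (u - v) = L u - L v := by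
    intro u v
    have h := hL (u - v) v
    rw [sub_add_cancel] at h
    exact eq_sub_of_add_eq h.symm
  have hLLt : ∀ x : X, L (Lt (L x)) = L x := by
    intro x
    obtain ⟨v, a₀, h1, h2, h3⟩ := hEGI x
    rw [h3, hL, h1, h2, add_zero]
  have key : ∀ x y : X,
      DasyH (fun u v : X => SX (u - v)) {z : X | L z = L x} {z : X | L z = L y}
        ≤ ν (L x) (L y) := by
    intro x y
    apply iSup₂_le
    intro a ha
    have ha' : L a = L x := ha
    have hcomm : L a + L y = L y + L a := by
      rw [← hL, ← hL, add_comm]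
    have hb : L (a + (Lt (L y) - Lt (L a))) = L y := by
      rw [hL, hsub, hLLt, hLLt, add_sub, hcomm, add_sub_cancel_right]
    calc distSet (fun u v : X => SX (u - v)) a {z : X | L z = L y}
        ≤ SX (a - (a + (Lt (L y) - Lt (L a)))) := by
          unfold distSet
          exact iInf₂_le (a + (Lt (L y) - Lt (L a))) hb
      _ = SX (Lt (L a) - Lt (L y)) := by congr 1; abel
      _ ≤ ν (L a) (L y) := hν a y
      _ = ν (L x) (L y) := by rw [ha']
  intro x y
  exact max_le_max (key x y) (key y x)
end

section
/- Let X and Y be real normed spaces and let L : X → Y be a linear map whose range L(X) is finite-dimensional and nonzero. Let 𝒮_X : X → [0,∞) satisfy, for some κ > 0, 𝒮_X(αu + βv) ≤ κ(|α|𝒮_X(u) + |β|𝒮_X(v)) for all scalars α,β ∈ ℝ and all u,v ∈ X. Let 𝒮_Y : Y → [0,∞] be such that: 𝒮_Y is positively homogeneous on L(X) (𝒮_Y(λy) = λ𝒮_Y(y) for all λ > 0 and y ∈ L(X)); 𝒮_Y(y) > 0 for every nonzero y ∈ L(X); and the set {y ∈ L(X) : 𝒮_Y(y) = 1} is bounded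 with respect to the norm of Y. Then there exist a linear map L̃ : L(X) → X and a constant σ ∈ (0,∞) such that L(L̃(t)) = t for every t ∈ L(X) and 𝒮_X(L̃(y) − L̃(z)) ≤ κσ·𝒮_Y(y − z) for all y,z ∈ L(X); in particular, L has a Lipschitz continuous extended generalized inverse from (L(X),𝒮_Y) to (X,𝒮_X) with constant κσ. -/
/-!
A linear right inverse `Lt` of `L` on its range exists because vector spaces are projective.
On the finite-dimensional range the coordinate functionals are continuous, so iterating the
quasi-triangle inequality over a basis gives `SX (Lt w) ≤ K * ‖w‖`. Positive homogeneity of `SY`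
rescales any `y` onto the bounded unit sphere `{SY = 1}`, so `‖y‖ ≤ M * SY y`; together,
`SX (Lt y) ≤ C * SY y`, and linearity of `Lt` turns this into the Lipschitz bound.
-/

open Finset

section QuasiTriangle

variable {E : Type*} [AddCommGroup E] [Module ℝ E] {S : E → ℝ} {κ : ℝ}

lemma quasi_triangle_max_one (hnn : ∀ x, 0 ≤ S x)
    (hS : ∀ (a b : ℝ) (u v : E), S (a • u + b • v) ≤ κ * (|a| * S u + |b| * S v))
    (a b : ℝ) (u v : E) : S (a • u + b • v) ≤ max κ 1 * (|a| * S u + |b| * S v) :=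
  (hS a b u v).trans <| mul_le_mul_of_nonneg_right (le_max_left κ 1) <|
    add_nonneg (mul_nonneg (abs_nonneg a) (hnn u)) (mul_nonneg (abs_nonneg b) (hnn v))

lemma le_pow_card_mul_sum_of_quasi_triangle (hnn : ∀ x, 0 ≤ S x) (hκ : 1 ≤ κ)
    (hS : ∀ (a b : ℝ) (u v : E), S (a • u + b • v) ≤ κ * (|a| * S u + |b| * S v))
    {ι : Type*} (s : Finset ι) (c : ι → ℝ) (x : ι → E) :
    S (∑ i ∈ s, c i • x i) ≤ κ ^ #s * ∑ i ∈ s, |c i| * S (x i) := by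
  induction s using Finset.cons_induction with
  | empty => simpa using hS 0 0 0 0
  | cons j s hj ih =>
    have hpow : 1 ≤ κ ^ #s := one_le_pow₀ hκ
    have hj_nn : 0 ≤ |c j| * S (x j) := mul_nonneg (abs_nonneg _) (hnn _)
    calc S (∑ i ∈ s.cons j hj, c i • x i)
        = S (c j • x j + (1 : ℝ) • ∑ i ∈ s, c i • x i) := by rw [sum_cons, one_smul]
      _ ≤ κ * (|c j| * S (x j) + S (∑ i ∈ s, c i • x i)) := by
          simpa using hS (c j) 1 (x j) (∑ i ∈ s, c i • x i)
      _ ≤ κ * (κ ^ #s * (|c j| * S (x j)) + κ ^ #s * ∑ i ∈ s, |c i| * S (x i)) :=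
          mul_le_mul_of_nonneg_left (add_le_add (le_mul_of_one_le_left hj_nn hpow) ih)
            (by linarith)
      _ = κ ^ #(s.cons j hj) * ∑ i ∈ s.cons j hj, |c i| * S (x i) := by
          rw [sum_cons, card_cons, pow_succ]; ring

lemma exists_le_mul_norm_of_quasi_triangle {V : Type*} [NormedAddCommGroup V] [NormedSpace ℝ V]
    [FiniteDimensional ℝ V] (T : V →ₗ[ℝ] E) (hnn : ∀ x, 0 ≤ S x)
    (hS : ∀ (a b : ℝ) (u v : E), S (a • u + b • v) ≤ κ * (|a| * S u + |b| * S v)) :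
    ∃ K, 0 ≤ K ∧ ∀ w, S (T w) ≤ K * ‖w‖ := by
  let b := Module.finBasis ℝ V
  let e : V →L[ℝ] (Fin (Module.finrank ℝ V) → ℝ) := b.equivFunL
  let K := max κ 1 ^ Module.finrank ℝ V * ‖e‖ * ∑ i, S (T (b i))
  have hK : 0 ≤ K := by
    have : 0 ≤ ∑ i, S (T (b i)) := sum_nonneg fun i _ => hnn _
    positivity
  refine ⟨K, hK, fun w => ?_⟩
  have hcoord : ∀ i, |b.equivFun w i| ≤ ‖e‖ * ‖w‖ := fun i =>
    (norm_le_pi_norm (e w) i).trans (e.le_opNorm w)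
  calc S (T w) = S (∑ i, b.equivFun w i • T (b i)) := by
        conv_lhs => rw [← b.sum_equivFun w]
        simp only [map_sum, map_smul]
    _ ≤ max κ 1 ^ Module.finrank ℝ V * ∑ i, |b.equivFun w i| * S (T (b i)) := by
        simpa using le_pow_card_mul_sum_of_quasi_triangle hnn (le_max_right κ 1)
          (quasi_triangle_max_one hnn hS) univ (b.equivFun w) (fun i => T (b i))
    _ ≤ max κ 1 ^ Module.finrank ℝ V * ∑ i, ‖e‖ * ‖w‖ * S (T (b i)) := by
        gcongr with i; exacts [hnn _, hcoord i]
    _ = K * ‖w‖ := by simp only [K, mul_sum, sum_mul]; exact sum_congr rfl fun i _ => by ring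

end QuasiTriangle

section PositivelyHomogeneous

variable {V : Type*} [NormedAddCommGroup V] [NormedSpace ℝ V] {SY : V → EReal}

lemma norm_le_mul_toReal_of_homogeneous
    (hhom : ∀ lam : ℝ, 0 < lam → ∀ y, SY (lam • y) = (lam : EReal) * SY y)
    {M : ℝ} (hM : ∀ y, SY y = 1 → ‖y‖ ≤ M) {y : V} (hpos : 0 < SY y) (htop : SY y ≠ ⊤) :
    ‖y‖ ≤ M * (SY y).toReal := by
  set lam := (SY y).toReal
  have hlam : (lam : EReal) = SY y := EReal.coe_toReal htop hpos.ne_bot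
  have hlam_pos : 0 < lam := by exact_mod_cast hlam ▸ hpos
  have hunit : SY (lam⁻¹ • y) = 1 := by
    rw [hhom _ (inv_pos.mpr hlam_pos), ← hlam, ← EReal.coe_mul, inv_mul_cancel₀ hlam_pos.ne',
      EReal.coe_one]
  calc ‖y‖ = lam * ‖lam⁻¹ • y‖ := by
        rw [norm_smul, Real.norm_of_nonneg (inv_nonneg.mpr hlam_pos.le),
          mul_inv_cancel_left₀ hlam_pos.ne']
    _ ≤ lam * M := by gcongr; exact hM _ hunit
    _ = M * lam := mul_comm _ _

lemma exists_le_mul_of_le_mul_norm_of_homogeneous {f : V → ℝ} {K : ℝ} (hK : 0 ≤ K)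
    (hf : ∀ w, f w ≤ K * ‖w‖) (h0 : 0 ≤ SY 0)
    (hhom : ∀ lam : ℝ, 0 < lam → ∀ y, SY (lam • y) = (lam : EReal) * SY y)
    (hpos : ∀ y, y ≠ 0 → 0 < SY y) {M : ℝ} (hM : ∀ y, SY y = 1 → ‖y‖ ≤ M) :
    ∃ C : ℝ, 0 < C ∧ ∀ y, (f y : EReal) ≤ C * SY y := by
  -- `M` may be negative when the unit sphere is empty.
  set C := K * max M 0 + 1
  have hC : 0 < C := by positivity
  refine ⟨C, hC, fun y => ?_⟩
  rcases eq_or_ne y 0 with rfl | hy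
  · have : f 0 ≤ 0 := by simpa using hf 0
    exact (EReal.coe_le_coe_iff.mpr this).trans (mul_nonneg (EReal.coe_nonneg.mpr hC.le) h0)
  rcases eq_or_ne (SY y) ⊤ with htop | htop
  · simp [htop, EReal.coe_mul_top_of_pos hC]
  have hpos_y := hpos y hy
  rw [← EReal.coe_toReal htop hpos_y.ne_bot, ← EReal.coe_mul, EReal.coe_le_coe_iff]
  calc f y ≤ K * ‖y‖ := hf y
    _ ≤ K * (max M 0 * (SY y).toReal) := by
        gcongr
        exact (norm_le_mul_toReal_of_homogeneous hhom hM hpos_y htop).trans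
          (by gcongr; exact le_max_left M 0)
    _ = K * max M 0 * (SY y).toReal := (mul_assoc ..).symm
    _ ≤ C * (SY y).toReal := by gcongr; exact le_add_of_nonneg_right zero_le_one

end PositivelyHomogeneous

theorem exists_lipschitz_extended_generalized_inverse_general {X Y : Type*}
    [NormedAddCommGroup X] [NormedSpace ℝ X]
    [NormedAddCommGroup Y] [NormedSpace ℝ Y]
    (L : X →ₗ[ℝ] Y) [FiniteDimensional ℝ (LinearMap.range L)]
    (SX : X → ℝ) (hSXnn : ∀ x : X, 0 ≤ SX x)
    (κ : ℝ) (hκ : 0 < κ)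
    (hSX : ∀ (a b : ℝ) (u v : X), SX (a • u + b • v) ≤ κ * (|a| * SX u + |b| * SX v))
    (SY : Y → EReal) (hSYnn : ∀ y : Y, 0 ≤ SY y)
    (hhom : ∀ lam : ℝ, 0 < lam → ∀ y ∈ LinearMap.range L, SY (lam • y) = (lam : EReal) * SY y)
    (hpos : ∀ y ∈ LinearMap.range L, y ≠ 0 → 0 < SY y)
    (hbdd : ∃ M : ℝ, ∀ y ∈ LinearMap.range L, SY y = 1 → ‖y‖ ≤ M) :
    ∃ (Lt : (LinearMap.range L) →ₗ[ℝ] X) (σ : ℝ), 0 < σ ∧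
      (∀ t : LinearMap.range L, L (Lt t) = (t : Y)) ∧
      (∀ y z : LinearMap.range L,
        ((SX (Lt y - Lt z) : ℝ) : EReal) ≤ ((κ * σ : ℝ) : EReal) * SY ((y : Y) - (z : Y))) := by
  obtain ⟨Lt, hLt⟩ := L.rangeRestrict.exists_rightInverse_of_surjective L.range_rangeRestrict
  obtain ⟨K, hK, hSXLt⟩ := exists_le_mul_norm_of_quasi_triangle Lt hSXnn hSX
  obtain ⟨M, hM⟩ := hbdd
  obtain ⟨C, hC, hSXSY⟩ := exists_le_mul_of_le_mul_norm_of_homogeneous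
    (SY := fun y : LinearMap.range L => SY y) hK hSXLt (hSYnn 0) (fun lam hlam y => hhom lam hlam y y.2)
    (fun y hy => hpos y y.2 (by simpa using hy)) (fun y => hM y y.2)
  refine ⟨Lt, C / κ, div_pos hC hκ, fun t => congrArg Subtype.val (LinearMap.congr_fun hLt t),
    fun y z => ?_⟩
  rw [mul_div_cancel₀ C hκ.ne', ← map_sub]
  exact hSXSY (y - z)

/-- **Existence of a Lipschitz continuous linear extended generalized inverse.**
Let `L : X → Y` be a linear map between real normed spaces whose range is
finite-dimensional and nonzero, let `SX : X → [0, ∞)` satisfy a `κ`-quasi-triangle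
inequality, and let `SY : Y → [0, ∞]` be positively homogeneous on the range of `L`,
positive on nonzero elements of the range, and have a norm-bounded unit "sphere" in the
range. Then there is a linear right inverse `Lt` of `L` on its range (in particular, an
extended generalized inverse) and a constant `σ > 0` such that `Lt` is `κσ`-Lipschitz
continuous from `(L(X), SY)` to `(X, SX)`. -/
theorem exists_lipschitz_extended_generalized_inverse {X Y : Type*}
    [NormedAddCommGroup X] [NormedSpace ℝ X]
    [NormedAddCommGroup Y] [NormedSpace ℝ Y]
    (L : X →ₗ[ℝ] Y) [FiniteDimensional ℝ (LinearMap.range L)]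
    (hne : LinearMap.range L ≠ ⊥)
    (SX : X → ℝ) (hSXnn : ∀ x : X, 0 ≤ SX x)
    (κ : ℝ) (hκ : 0 < κ)
    (hSX : ∀ (a b : ℝ) (u v : X), SX (a • u + b • v) ≤ κ * (|a| * SX u + |b| * SX v))
    (SY : Y → EReal) (hSYnn : ∀ y : Y, 0 ≤ SY y)
    (hhom : ∀ lam : ℝ, 0 < lam → ∀ y ∈ LinearMap.range L, SY (lam • y) = (lam : EReal) * SY y)
    (hpos : ∀ y ∈ LinearMap.range L, y ≠ 0 → 0 < SY y)
    (hbdd : ∃ M : ℝ, ∀ y ∈ LinearMap.range L, SY y = 1 → ‖y‖ ≤ M) :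
    ∃ (Lt : (LinearMap.range L) →ₗ[ℝ] X) (σ : ℝ), 0 < σ ∧
      (∀ t : LinearMap.range L, L (Lt t) = (t : Y)) ∧
      (∀ y z : LinearMap.range L,
        ((SX (Lt y - Lt z) : ℝ) : EReal) ≤ ((κ * σ : ℝ) : EReal) * SY ((y : Y) - (z : Y))) :=
  exists_lipschitz_extended_generalized_inverse_general L SX hSXnn κ hκ hSX SY hSYnn hhom hpos hbdd
end

section
/- (Nonlinear objective, linear constraints.) Let X be a commutative additive group, 𝒮_X : X → [0,∞], and d(u,v) := 𝒮_X(u−v). Let Y be an additive group, L : X → Y additive, I := L(X), and suppose L̃ : I → X is an extended generalized inverse of L (for every t ∈ I there exist v ∈ X and a₀ ∈ X with L(a₀) = 0, L(v) = t, L̃(t) = v + a₀) which is α-Lipschitz for some α > 0: 𝒮_X(L̃(s) − L̃(t)) ≤ α·𝒮_Ỹ(s−t) for all s,t ∈ I, where 𝒮_Ỹ : Y → [0,∞] satisfies 𝒮_Ỹ(0) = 0. Suppose the conjugate pseudo-magnitude y ↦ 𝒮_Ỹ(−y) is continuous at 0 with respect to 𝒮_Ỹ: for every ε > 0 there exists δ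 > 0 such that 𝒮_Ỹ(−y) < ε whenever 𝒮_Ỹ(y) < δ. Let f : X → ℝ be bounded from below and uniformly continuous with respect to d. Then the optimal value function φ_*(t) := inf{f(x) : x ∈ X, L(x) = t} is real-valued on I and continuous on I with respect to the distance d_I(s,t) := 𝒮_Ỹ(s−t): for every s ∈ I and ε > 0 there exists δ > 0 such that |φ_*(s) − φ_*(t)| < ε for all t ∈ I with 𝒮_Ỹ(s−t) < δ. -/
lemma INFf_eq {X : Type*} (f : X → ℝ) (A : Set X) (hne : A.Nonempty)
    (m : ℝ) (hm : ∀ x, m ≤ f x) : INFf f A = ((sInf (f '' A) : ℝ) : EReal) := by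
  have hbdd : BddBelow (f '' A) := ⟨m, by rintro _ ⟨a, _, rfl⟩; exact hm a⟩
  have hne' : (f '' A).Nonempty := hne.image f
  apply le_antisymm
  · rw [← EReal.le_of_forall_lt_iff_le]
    intro z hz
    obtain ⟨ε, hε, hεz⟩ : ∃ ε : ℝ, 0 < ε ∧ sInf (f '' A) + ε ≤ z := by
      refine ⟨(z - sInf (f '' A)) / 2, by linarith [EReal.coe_lt_coe_iff.1 hz], by
        have := EReal.coe_lt_coe_iff.1 hz; linarith⟩
    obtain ⟨y, ⟨a, ha, rfl⟩, hy⟩ := Real.lt_sInf_add_pos hne' hε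
    calc INFf f A ≤ (f a : EReal) := iInf₂_le a ha
      _ ≤ (z : EReal) := by exact_mod_cast (hy.le.trans hεz)
  · exact le_iInf₂ fun a ha => EReal.coe_le_coe_iff.2 (csInf_le hbdd ⟨a, ha, rfl⟩)

/-- **Nonlinear objective, linear constraints.**
Let `X` be a commutative additive group with pseudo-magnitude `SX : X → [0, ∞]`
inducing the pseudo-distance `d u v := SX (u - v)`, let `Y` be an additive group,
`L : X → Y` additive with range `I := L(X)`, and let `Lt` be an `α`-Lipschitz extended
generalized inverse of `L` with respect to pseudo-magnitudes `SX` and `SYt`, where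
`SYt 0 = 0` and the conjugate pseudo-magnitude `y ↦ SYt (-y)` is continuous at `0` with
respect to `SYt`. If `f : X → ℝ` is bounded from below and uniformly continuous with
respect to `d`, then the optimal value function `φ_*(t) := inf {f x : L x = t}` is
real-valued on `I` and continuous on `I` with respect to `d_I(s, t) := SYt (s - t)`. -/
theorem optimal_value_linear_constraints {X Y : Type*} [AddCommGroup X] [AddGroup Y]
    (SX : X → EReal) (hSXnn : ∀ x : X, 0 ≤ SX x)
    (L : X → Y) (hL : ∀ u v : X, L (u + v) = L u + L v)
    (Lt : Y → X)
    (hEGI : ∀ x : X, ∃ v a₀ : X, L a₀ = 0 ∧ L v = L x ∧ Lt (L x) = v + a₀)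
    (SYt : Y → EReal) (hSYnn : ∀ y : Y, 0 ≤ SYt y) (hSY0 : SYt 0 = 0)
    (α : ℝ) (hα : 0 < α)
    (hLip : ∀ x x' : X, SX (Lt (L x) - Lt (L x')) ≤ (α : EReal) * SYt (L x - L x'))
    (hconj : ∀ ε : ℝ, 0 < ε → ∃ δ : ℝ, 0 < δ ∧
      ∀ y : Y, SYt y < (δ : EReal) → SYt (-y) < (ε : EReal))
    (f : X → ℝ) (hbdd : ∃ m : ℝ, ∀ x : X, m ≤ f x)
    (huc : ∀ ε : ℝ, 0 < ε → ∃ δ : ℝ, 0 < δ ∧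
      ∀ x y : X, SX (x - y) < (δ : EReal) → |f x - f y| < ε) :
    (∀ x : X, ∃ r : ℝ, INFf f {z : X | L z = L x} = (r : EReal)) ∧
    (∀ x : X, ∀ ε : ℝ, 0 < ε → ∃ δ : ℝ, 0 < δ ∧
      ∀ x' : X, SYt (L x - L x') < (δ : EReal) →
        |(INFf f {z : X | L z = L x}).toReal - (INFf f {z : X | L z = L x'}).toReal| < ε) := by
  obtain ⟨m, hm⟩ := hbdd
  -- basic additivity facts
  have hL0 : L 0 = 0 := by have := hL 0 0; simpa using this
  have hLsub : ∀ u v : X, L (u - v) = L u - L v := by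
    intro u v
    have hneg : L (-v) = -(L v) := by
      have := hL v (-v); rw [add_neg_cancel, hL0] at this
      exact (neg_eq_of_add_eq_zero_right this.symm).symm
    rw [sub_eq_add_neg, hL u (-v), hneg, sub_eq_add_neg]
  have hLLt : ∀ x : X, L (Lt (L x)) = L x := by
    intro x
    obtain ⟨v, a₀, h0, hv, hlt⟩ := hEGI x
    rw [hlt, hL, h0, hv, add_zero]
  have hφeq : ∀ x : X, INFf f {z : X | L z = L x}
      = ((sInf (f '' {z : X | L z = L x}) : ℝ) : EReal) := fun x =>
    INFf_eq f _ ⟨x, rfl⟩ m hm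
  set φ : X → ℝ := fun x => sInf (f '' {z : X | L z = L x}) with hφ
  have hbb : ∀ x : X, BddBelow (f '' {z : X | L z = L x}) :=
    fun x => ⟨m, by rintro _ ⟨a, _, rfl⟩; exact hm a⟩
  -- one-sided estimate
  have key : ∀ ε : ℝ, 0 < ε → ∃ δ : ℝ, 0 < δ ∧ ∀ x x' : X,
      SYt (L x - L x') < (δ : EReal) → φ x < φ x' + ε := by
    intro ε hε
    obtain ⟨δf, hδf, hδfP⟩ := huc (ε / 2) (by linarith)
    refine ⟨δf / (2 * α), by positivity, fun x x' hd => ?_⟩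
    -- pick near-optimal z for x'
    have hne : (f '' {z : X | L z = L x'}).Nonempty :=
      Set.Nonempty.image f ⟨x', rfl⟩
    obtain ⟨y, ⟨z, hz, rfl⟩, hy⟩ :=
      Real.lt_sInf_add_pos hne (show (0:ℝ) < ε / 2 by linarith)
    have hz' : L z = L x' := hz
    set w : X := Lt (L x) - Lt (L x') + z with hw
    have hLw : L w = L x := by
      rw [hw, hL, hLsub, hLLt, hLLt, hz', sub_add_cancel]
    have hwz : SX (w - z) < (δf : EReal) := by
      have h1 : w - z = Lt (L x) - Lt (L x') := by rw [hw]; abel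
      rw [h1]
      calc SX (Lt (L x) - Lt (L x')) ≤ (α : EReal) * SYt (L x - L x') := hLip x x'
        _ ≤ (α : EReal) * ((δf / (2 * α) : ℝ) : EReal) :=
            mul_le_mul_of_nonneg_left hd.le (by exact_mod_cast hα.le)
        _ = ((α * (δf / (2 * α)) : ℝ) : EReal) := by rw [EReal.coe_mul]
        _ < (δf : EReal) := by
            apply EReal.coe_lt_coe_iff.2
            have h2 : α * (δf / (2 * α)) = δf / 2 := by
              field_simp
            rw [h2]; linarith
    have hfw : |f w - f z| < ε / 2 := hδfP w z hwz
    have : φ x ≤ f w := csInf_le (hbb x) ⟨w, hLw, rfl⟩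
    have : f w < f z + ε / 2 := by cases abs_lt.1 hfw; linarith
    calc φ x ≤ f w := csInf_le (hbb x) ⟨w, hLw, rfl⟩
      _ < f z + ε / 2 := this
      _ < φ x' + ε := by dsimp [φ] at hy ⊢; linarith
  constructor
  · exact fun x => ⟨φ x, hφeq x⟩
  · intro x ε hε
    obtain ⟨δ₁, hδ₁, hP₁⟩ := key (ε / 2) (by linarith)
    obtain ⟨δ₂, hδ₂, hP₂⟩ := hconj δ₁ hδ₁
    refine ⟨min δ₁ δ₂, lt_min hδ₁ hδ₂, fun x' hd => ?_⟩
    have hd1 : SYt (L x - L x') < (δ₁ : EReal) :=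
      hd.trans_le (by exact_mod_cast EReal.coe_le_coe_iff.2 (min_le_left _ _))
    have hd2 : SYt (L x' - L x) < (δ₁ : EReal) := by
      have := hP₂ (L x - L x')
        (hd.trans_le (by exact_mod_cast EReal.coe_le_coe_iff.2 (min_le_right _ _)))
      simpa [neg_sub] using this
    have h1 := hP₁ x x' hd1
    have h2 := hP₁ x' x hd2
    rw [hφeq x, hφeq x', EReal.toReal_coe, EReal.toReal_coe]
    rw [abs_lt]; constructor <;> [linarith; linarith]
end

section
/- Let ℝⁿ be endowed with a norm ‖·‖ and ℝᵐ with a norm ‖·‖_{ℝᵐ}, let C ⊆ ℝⁿ be compact and convex with nonempty interior, and let L : ℝⁿ → ℝᵐ be linear. For t ∈ L(ℝⁿ) let E_t := {x ∈ ℝⁿ : Lx = t}, let I := {t ∈ L(ℝⁿ) : E_t ∩ Int(C) ≠ ∅}, and assume I ≠ ∅. For t ∈ I let A_t := E_t ∩ C. Then for every s ∈ I, lim_{t→s, t∈I} D_H(A_s,A_t) = 0: for every ε > 0 there exists δ > 0 such that D_H(A_s,A_t) < ε for all t ∈ I with ‖s − t‖_{ℝᵐ} < δ, where D_H is the Hausdorff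 distance induced by ‖·‖ on ℝⁿ. -/
lemma DasyH_le_of_forall {X : Type*} {d : X → X → EReal} {A A' : Set X} {c : ℝ}
    (h : ∀ a ∈ A, ∃ a' ∈ A', d a a' ≤ (c : EReal)) : DasyH d A A' ≤ (c : EReal) := by
  refine iSup₂_le fun a ha => ?_
  obtain ⟨a', ha', hd⟩ := h a ha
  exact iInf₂_le_of_le a' ha' hd

set_option maxHeartbeats 1000000 in
set_option synthInstance.maxHeartbeats 400000 in
/-- **Hausdorff continuity of the constraint sets in mixed linear-nonlinear programming.**
Let `E` (playing the role of `ℝⁿ` with a norm) and `F` (playing the role of `ℝᵐ` with a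
norm) be finite-dimensional real normed spaces, let `C ⊆ E` be compact and convex with
nonempty interior, and let `L : E → F` be linear. For `t` in the range of `L`, let
`E_t := {x | L x = t}`, let `I` be the set of those `t` for which `E_t` meets the
interior of `C`, and `A_t := E_t ∩ C`. If `I ≠ ∅`, then for every `s ∈ I`,
`D_H(A_s, A_t) → 0` as `t → s` within `I`. -/
theorem hausdorff_continuity_of_slices {E F : Type*}
    [NormedAddCommGroup E] [NormedSpace ℝ E] [FiniteDimensional ℝ E]
    [NormedAddCommGroup F] [NormedSpace ℝ F] [FiniteDimensional ℝ F]
    (C : Set E) (hCcpt : IsCompact C) (hCconv : Convex ℝ C)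
    (hCint : (interior C).Nonempty)
    (L : E →ₗ[ℝ] F)
    (I : Set F)
    (hI : I = {t : F | t ∈ LinearMap.range L ∧ ({x : E | L x = t} ∩ interior C).Nonempty})
    (hIne : I.Nonempty) :
    ∀ s ∈ I, ∀ ε : ℝ, 0 < ε → ∃ δ : ℝ, 0 < δ ∧
      ∀ t ∈ I, ‖s - t‖ < δ →
        DH (fun u v : E => ((‖u - v‖ : ℝ) : EReal))
          ({x : E | L x = s} ∩ C) ({x : E | L x = t} ∩ C) < (ε : EReal) := by
  subst hI
  intro s hsI ε hε
  obtain ⟨hsr, x₀, hx₀s, hx₀int⟩ := hsI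
  have hx₀C : x₀ ∈ C := interior_subset hx₀int
  obtain ⟨r, hr, hball⟩ := Metric.mem_nhds_iff.mp (mem_interior_iff_mem_nhds.mp hx₀int)
  obtain ⟨R, hR⟩ := Metric.isBounded_iff.mp hCcpt.isBounded
  have hR0 : 0 ≤ R := by simpa using hR hx₀C hx₀C
  -- a bounded linear right inverse of `L` on its range
  obtain ⟨g, hg⟩ := L.rangeRestrict.exists_rightInverse_of_surjective
    (LinearMap.range_rangeRestrict L)
  have hLg : ∀ v : LinearMap.range L, L (g v) = (v : F) := by
    intro v
    have h1 : L.rangeRestrict (g v) = v := LinearMap.congr_fun hg v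
    exact congrArg Subtype.val h1
  obtain ⟨K, hK, hgw⟩ : ∃ K : ℝ, 0 < K ∧ ∀ v : LinearMap.range L, ‖g v‖ ≤ K * ‖v‖ := by
    obtain ⟨c, hc, hb⟩ := (LinearMap.toContinuousLinearMap g).bound
    exact ⟨c, hc, fun v => hb v⟩
  set lam : ℝ := min (ε / (4 * (R + 1))) (1 / 2) with hlamdef
  have hlam0 : 0 < lam := by
    apply lt_min
    · positivity
    · norm_num
  have hlam1 : lam ≤ 1 := (min_le_right _ _).trans (by norm_num)
  have hlamR : lam * R ≤ ε / 4 := by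
    have h1 : lam ≤ ε / (4 * (R + 1)) := min_le_left _ _
    have h2 : ε / (4 * (R + 1)) * R ≤ ε / 4 := by
      rw [div_mul_eq_mul_div, div_le_div_iff₀ (by positivity) (by norm_num)]
      nlinarith
    nlinarith
  refine ⟨min (lam * r / (2 * K)) (ε / (4 * K)), lt_min (by positivity) (by positivity), ?_⟩
  set δ : ℝ := min (lam * r / (2 * K)) (ε / (4 * K)) with hδdef
  intro t htI hst
  obtain ⟨htr, -⟩ := htI
  obtain ⟨w, hLw, hwnorm⟩ : ∃ w : E, L w = t - s ∧ ‖w‖ ≤ K * ‖t - s‖ :=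
    ⟨g ⟨t - s, sub_mem htr hsr⟩, hLg _, hgw _⟩
  have hwK : ‖w‖ < K * δ := by
    have h1 : ‖w‖ ≤ K * ‖t - s‖ := hwnorm
    have h2 : ‖t - s‖ < δ := by rwa [norm_sub_rev] at hst
    have h4 : (0:ℝ) ≤ ‖t - s‖ := norm_nonneg _
    have hδ0 : 0 < δ := lt_min (by positivity) (by positivity)
    nlinarith
  have hδ1 : δ ≤ lam * r / (2 * K) := min_le_left _ _
  have hδ2 : δ ≤ ε / (4 * K) := min_le_right _ _
  have hw_r : ‖w‖ < lam * r / 2 := by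
    have h1 : K * δ ≤ K * (lam * r / (2 * K)) := mul_le_mul_of_nonneg_left hδ1 hK.le
    have h2 : K * (lam * r / (2 * K)) = lam * r / 2 := by field_simp
    linarith
  have hw_ε : ‖w‖ < ε / 4 := by
    have h1 : K * δ ≤ K * (ε / (4 * K)) := mul_le_mul_of_nonneg_left hδ2 hK.le
    have h2 : K * (ε / (4 * K)) = ε / 4 := by field_simp
    linarith
  have hw0 : 0 ≤ ‖w‖ := norm_nonneg _
  have hr2 : lam * r / 2 ≤ r / 2 := by nlinarith
  -- Direction 1: every point of A_s is within ε/2 of A_t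
  have dir1 : ∀ x ∈ {x : E | L x = s} ∩ C, ∃ z ∈ {x : E | L x = t} ∩ C,
      ‖x - z‖ ≤ ε / 2 := by
    rintro x ⟨hxs, hxC⟩
    refine ⟨(1 - lam) • x + lam • x₀ + w, ⟨?_, ?_⟩, ?_⟩
    · have hxs' : L x = s := hxs
      have hx₀s' : L x₀ = s := hx₀s
      show L _ = t
      simp only [map_add, map_smul, hLw, hxs', hx₀s']
      module
    · have hmem : x₀ + lam⁻¹ • w ∈ C := by
        apply hball
        rw [Metric.mem_ball, dist_eq_norm]
        have : ‖x₀ + lam⁻¹ • w - x₀‖ = ‖w‖ / lam := by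
          rw [add_sub_cancel_left, norm_smul, norm_inv, Real.norm_eq_abs,
            abs_of_pos hlam0, div_eq_inv_mul]
        rw [this]
        rw [div_lt_iff₀ hlam0]
        nlinarith
      have hcomb := hCconv hxC hmem (by linarith : (0:ℝ) ≤ 1 - lam) hlam0.le (by ring)
      have heq : (1 - lam) • x + lam • (x₀ + lam⁻¹ • w) =
          (1 - lam) • x + lam • x₀ + w := by
        rw [smul_add, smul_smul, mul_inv_cancel₀ hlam0.ne', one_smul]
        abel
      rwa [heq] at hcomb
    · have heq : x - ((1 - lam) • x + lam • x₀ + w) = lam • (x - x₀) - w := by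
        match_scalars <;> ring
      rw [heq]
      have h1 : ‖lam • (x - x₀) - w‖ ≤ lam * ‖x - x₀‖ + ‖w‖ := by
        calc ‖lam • (x - x₀) - w‖ ≤ ‖lam • (x - x₀)‖ + ‖w‖ := norm_sub_le _ _
          _ = lam * ‖x - x₀‖ + ‖w‖ := by
              rw [norm_smul, Real.norm_eq_abs, abs_of_pos hlam0]
      have h2 : ‖x - x₀‖ ≤ R := by
        have := hR hxC hx₀C
        rwa [dist_eq_norm] at this
      nlinarith
  -- Direction 2: every point of A_t is within ε/2 of A_s
  have dir2 : ∀ y ∈ {x : E | L x = t} ∩ C, ∃ z ∈ {x : E | L x = s} ∩ C,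
      ‖y - z‖ ≤ ε / 2 := by
    rintro y ⟨hyt, hyC⟩
    refine ⟨(1 - lam) • y + lam • x₀ + (lam - 1) • w, ⟨?_, ?_⟩, ?_⟩
    · have hyt' : L y = t := hyt
      have hx₀s' : L x₀ = s := hx₀s
      show L _ = s
      simp only [map_add, map_smul, hLw, hyt', hx₀s']
      module
    · have hmem : x₀ + w - lam⁻¹ • w ∈ C := by
        apply hball
        rw [Metric.mem_ball, dist_eq_norm]
        have h1 : ‖x₀ + w - lam⁻¹ • w - x₀‖ ≤ ‖w‖ + ‖w‖ / lam := by
          have : x₀ + w - lam⁻¹ • w - x₀ = w - lam⁻¹ • w := by abel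
          rw [this]
          calc ‖w - lam⁻¹ • w‖ ≤ ‖w‖ + ‖lam⁻¹ • w‖ := norm_sub_le _ _
            _ = ‖w‖ + ‖w‖ / lam := by
                rw [norm_smul, norm_inv, Real.norm_eq_abs, abs_of_pos hlam0,
                  div_eq_inv_mul]
        have h2 : ‖w‖ / lam < r / 2 := by
          rw [div_lt_iff₀ hlam0]
          nlinarith
        have h3 : ‖w‖ < r / 2 := lt_of_lt_of_le hw_r hr2
        linarith
      have hcomb := hCconv hyC hmem (by linarith : (0:ℝ) ≤ 1 - lam) hlam0.le (by ring)
      have heq : (1 - lam) • y + lam • (x₀ + w - lam⁻¹ • w) =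
          (1 - lam) • y + lam • x₀ + (lam - 1) • w := by
        have hln : lam ≠ 0 := hlam0.ne'
        match_scalars <;> field_simp
      rwa [heq] at hcomb
    · have heq : y - ((1 - lam) • y + lam • x₀ + (lam - 1) • w) =
          lam • (y - x₀) + (1 - lam) • w := by
        match_scalars <;> ring
      rw [heq]
      have h1 : ‖lam • (y - x₀) + (1 - lam) • w‖ ≤ lam * ‖y - x₀‖ + (1 - lam) * ‖w‖ := by
        calc ‖lam • (y - x₀) + (1 - lam) • w‖
            ≤ ‖lam • (y - x₀)‖ + ‖(1 - lam) • w‖ := norm_add_le _ _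
          _ = lam * ‖y - x₀‖ + (1 - lam) * ‖w‖ := by
              rw [norm_smul, norm_smul, Real.norm_eq_abs, Real.norm_eq_abs,
                abs_of_pos hlam0, abs_of_nonneg (by linarith : (0:ℝ) ≤ 1 - lam)]
      have h2 : ‖y - x₀‖ ≤ R := by
        have := hR hyC hx₀C
        rwa [dist_eq_norm] at this
      nlinarith
  -- Conclude
  have hd1 : DasyH (fun u v : E => ((‖u - v‖ : ℝ) : EReal))
      ({x : E | L x = s} ∩ C) ({x : E | L x = t} ∩ C) ≤ ((ε / 2 : ℝ) : EReal) := by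
    apply DasyH_le_of_forall
    intro a ha
    obtain ⟨z, hz, hnorm⟩ := dir1 a ha
    exact ⟨z, hz, EReal.coe_le_coe_iff.mpr hnorm⟩
  have hd2 : DasyH (fun u v : E => ((‖u - v‖ : ℝ) : EReal))
      ({x : E | L x = t} ∩ C) ({x : E | L x = s} ∩ C) ≤ ((ε / 2 : ℝ) : EReal) := by
    apply DasyH_le_of_forall
    intro a ha
    obtain ⟨z, hz, hnorm⟩ := dir2 a ha
    exact ⟨z, hz, EReal.coe_le_coe_iff.mpr hnorm⟩
  have hmax : DH (fun u v : E => ((‖u - v‖ : ℝ) : EReal))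
      ({x : E | L x = s} ∩ C) ({x : E | L x = t} ∩ C) ≤ ((ε / 2 : ℝ) : EReal) :=
    max_le hd1 hd2
  exact lt_of_le_of_lt hmax (EReal.coe_lt_coe_iff.mpr (by linarith))
end

section
/- (Nonlinear objective, mixed linear-nonlinear constraints.) Let ℝⁿ be endowed with a norm ‖·‖ and ℝᵐ with a norm ‖·‖_{ℝᵐ}, let C ⊆ ℝⁿ be compact and convex with nonempty interior, let f : C → ℝ be continuous, and let L : ℝⁿ → ℝᵐ be linear. For t ∈ L(ℝⁿ) let E_t := {x ∈ ℝⁿ : Lx = t}, let I := {t ∈ L(ℝⁿ) : E_t ∩ Int(C) ≠ ∅}, and assume I ≠ ∅. Then for every t ∈ I the infimum φ_*(t) := inf{f(x) : x ∈ C, Lx = t} is a real number (and is attained), and the optimal value function φ_* is continuous on I: for every s ∈ I and ε > 0 there exists δ > 0 such that |φ_*(s) − φ_*(t)| < ε for all t ∈ I with ‖s − t‖_{ℝᵐ} < δ. -/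
set_option synthInstance.maxHeartbeats 1000000
set_option maxHeartbeats 1000000


/-- **Nonlinear objective, mixed linear-nonlinear constraints.**
Let `E` (playing the role of `ℝⁿ` with a norm) and `F` (playing the role of `ℝᵐ` with a
norm) be finite-dimensional real normed spaces, let `C ⊆ E` be compact and convex with
nonempty interior, let `f` be continuous on `C`, and let `L : E → F` be linear. Let `I`
be the set of `t` in the range of `L` such that `{x | L x = t}` meets the interior of
`C`, and assume `I ≠ ∅`. Then for every `t ∈ I` the infimum
`φ_*(t) := inf {f x : x ∈ C, L x = t}` is a real number which is attained (it is the
least element of the corresponding set of values), and `φ_*` is continuous on `I`. -/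
theorem optimal_value_mixed_constraints {E F : Type*}
    [NormedAddCommGroup E] [NormedSpace ℝ E] [FiniteDimensional ℝ E]
    [NormedAddCommGroup F] [NormedSpace ℝ F] [FiniteDimensional ℝ F]
    (C : Set E) (hCcpt : IsCompact C) (hCconv : Convex ℝ C)
    (hCint : (interior C).Nonempty)
    (f : E → ℝ) (hf : ContinuousOn f C)
    (L : E →ₗ[ℝ] F)
    (I : Set F)
    (hI : I = {t : F | t ∈ LinearMap.range L ∧ ({x : E | L x = t} ∩ interior C).Nonempty})
    (hIne : I.Nonempty) :
    (∀ t ∈ I, IsLeast (f '' ({x : E | L x = t} ∩ C)) (sInf (f '' ({x : E | L x = t} ∩ C)))) ∧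
    (∀ s ∈ I, ∀ ε : ℝ, 0 < ε → ∃ δ : ℝ, 0 < δ ∧
      ∀ t ∈ I, ‖s - t‖ < δ →
        |sInf (f '' ({x : E | L x = s} ∩ C)) - sInf (f '' ({x : E | L x = t} ∩ C))| < ε) := by
  -- Part 1: the infimum is attained.
  have part1 : ∀ t ∈ I, IsLeast (f '' ({x : E | L x = t} ∩ C))
      (sInf (f '' ({x : E | L x = t} ∩ C))) := by
    intro t ht
    rw [hI] at ht
    obtain ⟨htr, x, hxE, hxint⟩ := ht
    have hSne : ({x : E | L x = t} ∩ C).Nonempty := ⟨x, hxE, interior_subset hxint⟩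
    have hScl : IsClosed {x : E | L x = t} :=
      isClosed_eq L.continuous_of_finiteDimensional continuous_const
    have hScpt : IsCompact ({x : E | L x = t} ∩ C) := hCcpt.inter_left hScl
    obtain ⟨x₀, hx₀, hmin⟩ := hScpt.exists_isMinOn hSne (hf.mono Set.inter_subset_right)
    have hls : IsLeast (f '' ({x : E | L x = t} ∩ C)) (f x₀) := by
      refine ⟨Set.mem_image_of_mem f hx₀, ?_⟩
      rintro y ⟨z, hz, rfl⟩
      exact hmin hz
    rwa [hls.csInf_eq]
  refine ⟨part1, ?_⟩
  -- a bounded right inverse for L on its range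
  obtain ⟨K, hK0, hK⟩ : ∃ K : ℝ, 0 ≤ K ∧
      ∀ u ∈ LinearMap.range L, ∃ v : E, L v = u ∧ ‖v‖ ≤ K * ‖u‖ := by
    obtain ⟨g, hg⟩ := L.rangeRestrict.exists_rightInverse_of_surjective
      (LinearMap.range_rangeRestrict L)
    let g' := LinearMap.toContinuousLinearMap g
    refine ⟨‖g'‖, ContinuousLinearMap.opNorm_nonneg _, fun u hu => ⟨g ⟨u, hu⟩, ?_, ?_⟩⟩
    · have h1 := LinearMap.congr_fun hg ⟨u, hu⟩
      exact congrArg Subtype.val h1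
    · calc ‖g ⟨u, hu⟩‖ = ‖g' ⟨u, hu⟩‖ := rfl
        _ ≤ ‖g'‖ * ‖(⟨u, hu⟩ : LinearMap.range L)‖ := g'.le_opNorm _
        _ = ‖g'‖ * ‖u‖ := rfl
  -- diameter bound
  set D := Metric.diam C with hD
  have hD0 : 0 ≤ D := Metric.diam_nonneg
  have hdistD : ∀ a ∈ C, ∀ b ∈ C, ‖a - b‖ ≤ D := by
    intro a ha b hb
    rw [← dist_eq_norm]
    exact Metric.dist_le_diam_of_mem hCcpt.isBounded ha hb
  -- uniform continuity
  have hufc := Metric.uniformContinuousOn_iff.mp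
    (hCcpt.uniformContinuousOn_of_continuous hf)
  intro s hs ε hε
  obtain ⟨η, hη0, hη⟩ := hufc ε hε
  -- interior point on the fiber of s
  have hs' := hs
  rw [hI] at hs'
  obtain ⟨hsr, x₀, hx₀E, hx₀int⟩ := hs'
  have hx₀E' : L x₀ = s := hx₀E
  obtain ⟨r', hr'0, hball'⟩ := Metric.isOpen_iff.mp isOpen_interior x₀ hx₀int
  set r := r' / 2 with hrdef
  have hr0 : 0 < r := by positivity
  have hball : Metric.closedBall x₀ r ⊆ C := by
    intro y hy
    exact interior_subset (hball' (lt_of_le_of_lt (Metric.mem_closedBall.mp hy) (by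
      rw [hrdef]; linarith)))
  have hx₀C : x₀ ∈ C := hball (Metric.mem_closedBall_self hr0.le)
  -- choose lam and δ
  set lam := min 1 (η / (2 * (D + 1))) with hlamdef
  have hlam0 : 0 < lam := lt_min one_pos (by positivity)
  have hlam1 : lam ≤ 1 := min_le_left _ _
  have hlamD : lam * (D + 1) ≤ η / 2 := by
    have h := min_le_right 1 (η / (2 * (D + 1)))
    rw [le_div_iff₀ (by positivity : (0:ℝ) < 2 * (D + 1))] at h
    nlinarith
  refine ⟨min (lam * r) (η / 2) / (K + 1), by positivity, ?_⟩
  intro t ht hst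
  -- key construction
  have key : ∀ a ∈ C, ∀ u ∈ LinearMap.range L,
      ‖u - L ((1 - lam) • a + lam • x₀)‖ ≤ ‖s - t‖ →
      ∃ w, L w = u ∧ w ∈ C ∧ |f w - f a| < ε := by
    intro a ha u hu hnorm
    obtain ⟨v, hLv, hvK⟩ := hK (u - L ((1 - lam) • a + lam • x₀))
      (Submodule.sub_mem _ hu (LinearMap.mem_range_self L _))
    have hvb : ‖v‖ ≤ K * ‖s - t‖ := le_trans hvK (by
      exact mul_le_mul_of_nonneg_left hnorm hK0)
    have hst' : (K + 1) * ‖s - t‖ < min (lam * r) (η / 2) := by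
      have h1 : (K + 1) * ‖s - t‖ < (K + 1) * (min (lam * r) (η / 2) / (K + 1)) :=
        mul_lt_mul_of_pos_left hst (by positivity)
      rwa [mul_div_cancel₀ _ (by positivity : (K:ℝ) + 1 ≠ 0)] at h1
    have hvr : ‖v‖ ≤ lam * r := by
      have h2 : K * ‖s - t‖ ≤ (K + 1) * ‖s - t‖ := by nlinarith [norm_nonneg (s - t)]
      have := lt_of_le_of_lt (le_trans hvb h2) hst'
      exact le_of_lt (lt_of_lt_of_le this (min_le_left _ _))
    have hvη : ‖v‖ < η / 2 := by
      have h2 : K * ‖s - t‖ ≤ (K + 1) * ‖s - t‖ := by nlinarith [norm_nonneg (s - t)]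
      exact lt_of_le_of_lt (le_trans hvb h2) (lt_of_lt_of_le hst' (min_le_right _ _))
    set w := (1 - lam) • a + lam • x₀ + v with hwdef
    have hwC : w ∈ C := by
      have hmem : x₀ + lam⁻¹ • v ∈ C := by
        apply hball
        rw [Metric.mem_closedBall, dist_eq_norm, add_sub_cancel_left, norm_smul,
          norm_inv, Real.norm_eq_abs, abs_of_pos hlam0]
        rw [inv_mul_le_iff₀ hlam0]
        linarith [hvr]
      have := hCconv ha hmem (by linarith : (0:ℝ) ≤ 1 - lam) hlam0.le (by ring)
      have heq : (1 - lam) • a + lam • (x₀ + lam⁻¹ • v) = w := by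
        rw [hwdef, smul_add, smul_inv_smul₀ hlam0.ne', add_assoc]
      rwa [heq] at this
    have hLw : L w = u := by
      rw [hwdef, map_add, hLv]
      abel
    refine ⟨w, hLw, hwC, ?_⟩
    have hwa : ‖w - a‖ < η := by
      have heq : w - a = lam • (x₀ - a) + v := by
        rw [hwdef]; module
      rw [heq]
      have h1 : ‖lam • (x₀ - a)‖ = lam * ‖x₀ - a‖ := by
        rw [norm_smul, Real.norm_eq_abs, abs_of_pos hlam0]
      have h2 : ‖x₀ - a‖ ≤ D := hdistD x₀ hx₀C a ha
      have h3 : lam * ‖x₀ - a‖ < η / 2 := by nlinarith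
      calc ‖lam • (x₀ - a) + v‖ ≤ ‖lam • (x₀ - a)‖ + ‖v‖ := norm_add_le _ _
        _ < η / 2 + η / 2 := by rw [h1]; linarith
        _ = η := by ring
    have := hη w hwC a ha (by rwa [dist_eq_norm])
    rwa [Real.dist_eq] at this
  -- extract minimizers
  obtain ⟨xs, hxsS, hxseq⟩ := (part1 s hs).1
  obtain ⟨xt, hxtS, hxteq⟩ := (part1 t ht).1
  have hLxs : L xs = s := hxsS.1
  have hLxt : L xt = t := hxtS.1
  have htr : t ∈ LinearMap.range L := by rw [hI] at ht; exact ht.1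
  -- direction 1 : φ t < φ s + ε
  have hdir1 : sInf (f '' ({x : E | L x = t} ∩ C)) < sInf (f '' ({x : E | L x = s} ∩ C)) + ε := by
    obtain ⟨w, hLw, hwC, hwf⟩ := key xs hxsS.2 t htr (by
      rw [map_add, map_smul, map_smul, hLxs, hx₀E']
      have : t - ((1 - lam) • s + lam • s) = t - s := by module
      rw [this, norm_sub_rev])
    have h1 : sInf (f '' ({x : E | L x = t} ∩ C)) ≤ f w :=
      (part1 t ht).2 (Set.mem_image_of_mem f ⟨hLw, hwC⟩)
    have h2 : |f w - f xs| < ε := hwf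
    rw [← hxseq] at *
    have := abs_lt.mp h2
    linarith
  -- direction 2 : φ s < φ t + ε
  have hdir2 : sInf (f '' ({x : E | L x = s} ∩ C)) < sInf (f '' ({x : E | L x = t} ∩ C)) + ε := by
    obtain ⟨w, hLw, hwC, hwf⟩ := key xt hxtS.2 s hsr (by
      rw [map_add, map_smul, map_smul, hLxt, hx₀E']
      have heq : s - ((1 - lam) • t + lam • s) = (1 - lam) • (s - t) := by module
      rw [heq, norm_smul, Real.norm_eq_abs, abs_of_nonneg (by linarith : (0:ℝ) ≤ 1 - lam)]
      nlinarith [norm_nonneg (s - t)])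
    have h1 : sInf (f '' ({x : E | L x = s} ∩ C)) ≤ f w :=
      (part1 s hs).2 (Set.mem_image_of_mem f ⟨hLw, hwC⟩)
    have h2 := abs_lt.mp hwf
    rw [← hxteq] at *
    linarith
  rw [abs_sub_lt_iff]
  constructor <;> linarith
end

section
/- Let X be a real normed space with X ≠ {0}, let U ⊆ X be open and convex, and let f : U → ℝ be twice continuously Fréchet differentiable. Let C ⊆ X be convex with C ∩ U ≠ ∅. Assume the second derivative f'' is bounded on every bounded subset of C ∩ U and uniformly continuous on every bounded subset of C ∩ U. Fix y₀ ∈ C ∩ U and set s₀ := ‖f''(y₀)‖. If sup{‖f''(x)‖ : x ∈ C ∩ U} = ∞, then for every strictly increasing sequence (λ_k)_{k≥1} of positive real numbers with λ₁ > s₀ and λ_k → ∞, there exists a sequence (S_k)_{k≥1} of bounded convex subsets of C, increasing with respect to inclusion (and each S_k closed if C is closed), such that: S_k ∩ U ≠ ∅ for every k; ⋃_{k≥1} S_k = C; for every k, the derivative f' is Lipschitz continuous on S_k ∩ U with λ_k as a Lipschitz constant, i.e., ‖f'(x) − f'(y)‖ ≤ λ_k‖x − y‖ for all x,y ∈ S_k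 ∩ U; and if C contains more than one point, then each S_k ∩ U contains more than one point. -/
/-!
Take `S k = C ∩ closedBall y₀ (ρ k)`. Since `f''` is continuous at `y₀` and `‖f''(y₀)‖ < λ₀`,
some ball of radius `δ₀` around `y₀` lies in `U` and carries `‖f''‖ ≤ λ₀`; and since `f''` is
bounded on `C ∩ U ∩ closedBall y₀ n` while `λ_k → ∞`, the bound `λ_k` eventually holds on each
such ball. So `ρ k`, the larger of `δ₀` and the largest integer radius `n ≤ k` carrying the
bound `λ_k`, increases to `∞`, and the mean value inequality applied to `f'` on the convex set
`S k ∩ U` gives the Lipschitz constant `λ_k`. The second point of `S k ∩ U` is taken on a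
segment of `C` issuing from `y₀`, inside the ball of radius `δ₀`.
-/

open Filter Metric Set Topology

theorem exists_monotone_tendsto_atTop_of_eventually {P : ℕ → ℕ → Prop}
    (hzero : ∀ k, P k 0) (hmono : ∀ {k l n}, k ≤ l → P k n → P l n)
    (hev : ∀ n, ∀ᶠ k in atTop, P k n) :
    ∃ r : ℕ → ℕ, Monotone r ∧ Tendsto r atTop atTop ∧ ∀ k, P k (r k) := by
  classical
  refine ⟨fun k => Nat.findGreatest (P k) k, monotone_nat_of_le_succ fun k => ?_,
    tendsto_atTop.2 fun n => ?_, fun k => Nat.findGreatest_spec (Nat.zero_le k) (hzero k)⟩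
  · exact Nat.le_findGreatest ((Nat.findGreatest_le k).trans k.le_succ)
      (hmono k.le_succ (Nat.findGreatest_spec (Nat.zero_le k) (hzero k)))
  · filter_upwards [hev n, eventually_ge_atTop n] with k hPk hnk
    exact Nat.le_findGreatest hnk hPk

theorem exists_monotone_radii_forall_le {X : Type*} [PseudoMetricSpace X] {D : Set X}
    {g : X → ℝ} {y : X} (hbdd : ∀ R : ℝ, ∃ M, ∀ x ∈ D ∩ closedBall y R, g x ≤ M)
    {δ : ℝ} (hδ : 0 ≤ δ) {lam : ℕ → ℝ} (hsmall : ∀ x ∈ D ∩ closedBall y δ, g x ≤ lam 0)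
    (hlam : Monotone lam) (hto : Tendsto lam atTop atTop) :
    ∃ ρ : ℕ → ℝ, Monotone ρ ∧ Tendsto ρ atTop atTop ∧ (∀ k, δ ≤ ρ k) ∧
      ∀ k, ∀ x ∈ D ∩ closedBall y (ρ k), g x ≤ lam k := by
  obtain ⟨r, hr_mono, hr_tendsto, hr⟩ := exists_monotone_tendsto_atTop_of_eventually
    (P := fun k n => ∀ x ∈ D ∩ closedBall y (max δ n), g x ≤ lam k)
    (fun k x hx => (hsmall x (by simpa [hδ] using hx)).trans (hlam (Nat.zero_le k)))
    (fun hkl hk x hx => (hk x hx).trans (hlam hkl))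
    (fun n => by
      obtain ⟨M, hM⟩ := hbdd (max δ n)
      filter_upwards [hto.eventually_ge_atTop M] with k hk x hx using (hM x hx).trans hk)
  exact ⟨fun k => max δ (r k), fun k l hkl => max_le_max le_rfl (by exact_mod_cast hr_mono hkl),
    tendsto_atTop_mono (fun _ => le_max_right _ _) (tendsto_natCast_atTop_atTop.comp hr_tendsto),
    fun _ => le_max_left _ _, hr⟩

theorem iUnion_inter_closedBall_of_tendsto {X : Type*} [PseudoMetricSpace X] (C : Set X) (y : X)
    {ρ : ℕ → ℝ} (hρ : Tendsto ρ atTop atTop) : ⋃ k, C ∩ closedBall y (ρ k) = C := by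
  rw [← inter_iUnion, inter_eq_left]
  intro x _
  obtain ⟨k, hk⟩ := (hρ.eventually_ge_atTop (dist x y)).exists
  exact mem_iUnion.2 ⟨k, hk⟩

theorem ContinuousAt.exists_closedBall_norm_lt {X F : Type*} [PseudoMetricSpace X]
    [SeminormedAddGroup F] {g : X → F} {y : X} (hg : ContinuousAt g y) {L : ℝ} (hL : ‖g y‖ < L)
    {U : Set X} (hU : U ∈ 𝓝 y) : ∃ δ > 0, ∀ ⦃x⦄, x ∈ closedBall y δ → x ∈ U ∧ ‖g x‖ < L :=
  nhds_basis_closedBall.eventually_iff.1 <|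
    Filter.Eventually.and hU (hg.norm.eventually (gt_mem_nhds hL))

theorem Convex.exists_mem_ne_dist_lt {E : Type*} [NormedAddCommGroup E] [NormedSpace ℝ E]
    {C : Set E} (hC : Convex ℝ C) (hCn : C.Nontrivial) {y : E} (hy : y ∈ C) {ε : ℝ}
    (hε : 0 < ε) : ∃ z ∈ C, z ≠ y ∧ dist z y < ε := by
  obtain ⟨w, hw, hwy⟩ := hCn.exists_ne y
  have hcl : y ∈ closure (openSegment ℝ y w) :=
    segment_subset_closure_openSegment (left_mem_segment ℝ y w)
  obtain ⟨z, hz, hyz⟩ := Metric.mem_closure_iff.1 hcl ε hε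
  refine ⟨z, hC.openSegment_subset hy hw hz, ?_, by rwa [dist_comm]⟩
  rintro rfl
  exact hwy (left_mem_openSegment_iff.1 hz).symm

theorem norm_fderiv_sub_le_of_norm_fderiv_fderiv_le {𝕜 E F : Type*} [RCLike 𝕜]
    [NormedAddCommGroup E] [NormedSpace ℝ E] [NormedSpace 𝕜 E]
    [NormedAddCommGroup F] [NormedSpace 𝕜 F]
    {f : E → F} {U s : Set E} (hf : ContDiffOn 𝕜 2 f U) (hU : IsOpen U) (hs : Convex ℝ s)
    (hsU : s ⊆ U) {L : ℝ} (hbound : ∀ x ∈ s, ‖fderiv 𝕜 (fderiv 𝕜 f) x‖ ≤ L) {x y : E}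
    (hx : x ∈ s) (hy : y ∈ s) : ‖fderiv 𝕜 f x - fderiv 𝕜 f y‖ ≤ L * ‖x - y‖ := by
  have hf' : ContDiffOn 𝕜 1 (fderiv 𝕜 f) U := hf.fderiv_of_isOpen hU (by norm_num)
  refine hs.norm_image_sub_le_of_norm_fderiv_le (fun z hz => ?_) hbound hy hx
  exact (hf'.differentiableOn one_ne_zero z (hsU hz)).differentiableAt (hU.mem_nhds (hsU hz))

theorem lipschitz_constants_sequence_general {X : Type*}
    [NormedAddCommGroup X] [NormedSpace ℝ X]
    (U : Set X) (hUopen : IsOpen U) (hUconv : Convex ℝ U)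
    (f : X → ℝ) (hf : ContDiffOn ℝ 2 f U)
    (C : Set X) (hCconv : Convex ℝ C)
    (hbdd : ∀ B ⊆ C ∩ U, Bornology.IsBounded B →
      ∃ M : ℝ, ∀ x ∈ B, ‖fderiv ℝ (fderiv ℝ f) x‖ ≤ M)
    (y₀ : X) (hy₀ : y₀ ∈ C ∩ U)
    (lam : ℕ → ℝ) (hmono : StrictMono lam)
    (hlam0 : ‖fderiv ℝ (fderiv ℝ f) y₀‖ < lam 0)
    (hto : Filter.Tendsto lam Filter.atTop Filter.atTop) :
    ∃ S : ℕ → Set X,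
      (∀ k : ℕ, Bornology.IsBounded (S k)) ∧
      (∀ k : ℕ, Convex ℝ (S k)) ∧
      (∀ k : ℕ, S k ⊆ C) ∧
      Monotone S ∧
      (IsClosed C → ∀ k : ℕ, IsClosed (S k)) ∧
      (∀ k : ℕ, (S k ∩ U).Nonempty) ∧
      (⋃ k : ℕ, S k) = C ∧
      (∀ k : ℕ, ∀ x ∈ S k ∩ U, ∀ y ∈ S k ∩ U,
        ‖fderiv ℝ f x - fderiv ℝ f y‖ ≤ lam k * ‖x - y‖) ∧
      ((∃ a ∈ C, ∃ b ∈ C, a ≠ b) →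
        ∀ k : ℕ, ∃ a ∈ S k ∩ U, ∃ b ∈ S k ∩ U, a ≠ b) := by
  obtain ⟨hy₀C, hy₀U⟩ := hy₀
  have hcont : ContinuousAt (fderiv ℝ (fderiv ℝ f)) y₀ :=
    ((hf.fderiv_of_isOpen hUopen one_add_one_eq_two.le).continuousOn_fderiv_of_isOpen
      hUopen le_rfl).continuousAt (hUopen.mem_nhds hy₀U)
  obtain ⟨δ₀, hδ₀, hball⟩ := ContinuousAt.exists_closedBall_norm_lt
    (g := fderiv ℝ (fderiv ℝ f)) hcont hlam0 (hUopen.mem_nhds hy₀U)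
  obtain ⟨ρ, hρ_mono, hρ_tendsto, hδ₀ρ, hρ⟩ := exists_monotone_radii_forall_le
    (D := C ∩ U) (g := fun x => ‖fderiv ℝ (fderiv ℝ f) x‖)
    (fun R => hbdd _ inter_subset_left (isBounded_closedBall.subset inter_subset_right))
    hδ₀.le (fun x hx => (hball hx.2).2.le) hmono.monotone hto
  have hy₀S : ∀ k, y₀ ∈ C ∩ closedBall y₀ (ρ k) :=
    fun k => ⟨hy₀C, mem_closedBall_self (hδ₀.le.trans (hδ₀ρ k))⟩
  refine ⟨fun k => C ∩ closedBall y₀ (ρ k), fun k => isBounded_closedBall.subset inter_subset_right,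
    fun k => hCconv.inter (convex_closedBall _ _), fun k => inter_subset_left,
    fun k l hkl => inter_subset_inter_right _ (closedBall_subset_closedBall (hρ_mono hkl)),
    fun hC k => hC.inter isClosed_closedBall, fun k => ⟨y₀, hy₀S k, hy₀U⟩,
    iUnion_inter_closedBall_of_tendsto C y₀ hρ_tendsto,
    fun k x hx y hy => norm_fderiv_sub_le_of_norm_fderiv_fderiv_le hf hUopen
      ((hCconv.inter (convex_closedBall _ _)).inter hUconv) inter_subset_right
      (fun z hz => hρ k z ⟨⟨hz.1.1, hz.2⟩, hz.1.2⟩) hx hy,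
    fun hCn k => ?_⟩
  obtain ⟨z, hzC, hzy₀, hz⟩ := hCconv.exists_mem_ne_dist_lt hCn hy₀C hδ₀
  exact ⟨z, ⟨⟨hzC, hz.le.trans (hδ₀ρ k)⟩, (hball hz.le).1⟩, y₀, ⟨hy₀S k, hy₀U⟩, hzy₀⟩

/-- **A sequence of Lipschitz constants for the derivative.**
Let `X ≠ {0}` be a real normed space, `U ⊆ X` open and convex, `f : U → ℝ` twice
continuously Fréchet differentiable, and `C ⊆ X` convex with `C ∩ U ≠ ∅`. Assume `f''`
is bounded and uniformly continuous on bounded subsets of `C ∩ U`. Fix `y₀ ∈ C ∩ U` and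
set `s₀ := ‖f''(y₀)‖`. If `sup {‖f''(x)‖ : x ∈ C ∩ U} = ∞`, then for every strictly
increasing sequence `(λ_k)` of positive numbers with `λ₀ > s₀` and `λ_k → ∞`, there is
an increasing sequence `(S_k)` of bounded convex subsets of `C` (closed if `C` is
closed) with `S_k ∩ U ≠ ∅`, `⋃ S_k = C`, `f'` Lipschitz continuous on `S_k ∩ U` with
constant `λ_k`, and each `S_k ∩ U` containing more than one point whenever `C` does. -/
theorem lipschitz_constants_sequence {X : Type*}
    [NormedAddCommGroup X] [NormedSpace ℝ X] [Nontrivial X]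
    (U : Set X) (hUopen : IsOpen U) (hUconv : Convex ℝ U)
    (f : X → ℝ) (hf : ContDiffOn ℝ 2 f U)
    (C : Set X) (hCconv : Convex ℝ C) (hCU : (C ∩ U).Nonempty)
    (hbdd : ∀ B ⊆ C ∩ U, Bornology.IsBounded B →
      ∃ M : ℝ, ∀ x ∈ B, ‖fderiv ℝ (fderiv ℝ f) x‖ ≤ M)
    (huc : ∀ B ⊆ C ∩ U, Bornology.IsBounded B → ∀ ε : ℝ, 0 < ε → ∃ δ : ℝ, 0 < δ ∧
      ∀ x ∈ B, ∀ y ∈ B, ‖x - y‖ < δ →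
        ‖fderiv ℝ (fderiv ℝ f) x - fderiv ℝ (fderiv ℝ f) y‖ < ε)
    (y₀ : X) (hy₀ : y₀ ∈ C ∩ U)
    (hsup : ∀ M : ℝ, ∃ x ∈ C ∩ U, M < ‖fderiv ℝ (fderiv ℝ f) x‖)
    (lam : ℕ → ℝ) (hmono : StrictMono lam) (hpos : ∀ k : ℕ, 0 < lam k)
    (hlam0 : ‖fderiv ℝ (fderiv ℝ f) y₀‖ < lam 0)
    (hto : Filter.Tendsto lam Filter.atTop Filter.atTop) :
    ∃ S : ℕ → Set X,
      (∀ k : ℕ, Bornology.IsBounded (S k)) ∧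
      (∀ k : ℕ, Convex ℝ (S k)) ∧
      (∀ k : ℕ, S k ⊆ C) ∧
      Monotone S ∧
      (IsClosed C → ∀ k : ℕ, IsClosed (S k)) ∧
      (∀ k : ℕ, (S k ∩ U).Nonempty) ∧
      (⋃ k : ℕ, S k) = C ∧
      (∀ k : ℕ, ∀ x ∈ S k ∩ U, ∀ y ∈ S k ∩ U,
        ‖fderiv ℝ f x - fderiv ℝ f y‖ ≤ lam k * ‖x - y‖) ∧
      ((∃ a ∈ C, ∃ b ∈ C, a ≠ b) →
        ∀ k : ℕ, ∃ a ∈ S k ∩ U, ∃ b ∈ S k ∩ U, a ≠ b) :=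
  lipschitz_constants_sequence_general U hUopen hUconv f hf C hCconv hbdd y₀ hy₀ lam hmono hlam0 hto
end

section
/- Let (X,d) be a pseudo-distance space and let f : X → ℝ be uniformly continuous on (X,d). Let A ⊆ X be nonempty with INF_f(A) ∈ ℝ, and let (A_k)_{k≥1} be a sequence of nonempty subsets of X such that INF_f(A_k) ∈ ℝ for every k and lim_{k→∞} D_H(A,A_k) = 0 (for every ε > 0 there is K such that D_H(A,A_k) < ε for all k ≥ K). Let (σ̃_k)_{k≥1} be a sequence of real numbers with lim_{k→∞} |σ̃_k − INF_f(A_k)| = 0. Then lim_{k→∞} σ̃_k = INF_f(A). -/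
lemma key_inf_le {X : Type*} (d : X → X → EReal) (f : X → ℝ) (ε δ : ℝ)
    (hδ : ∀ x y : X, d x y < (δ : EReal) → |f x - f y| < ε)
    (A B : Set X) (rA rB : ℝ) (hrA : INFf f A = (rA : EReal))
    (hrB : INFf f B = (rB : EReal)) (h : DasyH d A B < (δ : EReal)) :
    rB ≤ rA + ε := by
  have h1 : ((rB - ε : ℝ) : EReal) ≤ INFf f A := by
    rw [INFf]
    refine le_iInf₂ fun a ha => ?_
    have hd : distSet d a B < (δ : EReal) :=
      lt_of_le_of_lt (le_iSup₂ (f := fun a (_ : a ∈ A) => distSet d a B) a ha) h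
    rw [distSet] at hd
    obtain ⟨b, hb⟩ := iInf_lt_iff.mp hd
    obtain ⟨hbB, hdb⟩ := iInf_lt_iff.mp hb
    have hfb := hδ a b hdb
    have h2 : (rB : EReal) ≤ (f b : EReal) := by
      rw [← hrB, INFf]; exact iInf₂_le b hbB
    have h3 : rB ≤ f b := EReal.coe_le_coe_iff.mp h2
    have h4 : rB - ε ≤ f a := by
      have := abs_lt.mp hfb; linarith
    exact EReal.coe_le_coe_iff.mpr h4
  rw [hrA] at h1
  have := EReal.coe_le_coe_iff.mp h1
  linarith

/-- **A general scheme for nonconvex nonsmooth optimization.**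
Let `f : X → ℝ` be uniformly continuous on the pseudo-distance space `(X, d)`, let
`A ⊆ X` be nonempty with `INF_f(A) = r ∈ ℝ`, and let `(A_k)` be nonempty subsets of `X`
with `INF_f(A_k) ∈ ℝ` for each `k` and `D_H(A, A_k) → 0`. If `(σ̃_k)` are reals with
`|σ̃_k − INF_f(A_k)| → 0`, then `σ̃_k → INF_f(A) = r`. -/
theorem approximation_scheme_converges {X : Type*} [Nonempty X]
    (d : X → X → EReal) (f : X → ℝ)
    (hf : ∀ ε : ℝ, 0 < ε → ∃ δ : ℝ, 0 < δ ∧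
      ∀ x y : X, d x y < (δ : EReal) → |f x - f y| < ε)
    (A : Set X) (hA : A.Nonempty) (r : ℝ) (hr : INFf f A = (r : EReal))
    (Ak : ℕ → Set X) (hAkne : ∀ k : ℕ, (Ak k).Nonempty)
    (hAkfin : ∀ k : ℕ, ∃ ρ : ℝ, INFf f (Ak k) = (ρ : EReal))
    (hconv : ∀ ε : ℝ, 0 < ε → ∃ K : ℕ, ∀ k ≥ K, DH d A (Ak k) < (ε : EReal))
    (σ : ℕ → ℝ)
    (hσ : ∀ ε : ℝ, 0 < ε → ∃ K : ℕ, ∀ k ≥ K, |σ k - (INFf f (Ak k)).toReal| < ε) :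
    Filter.Tendsto σ Filter.atTop (nhds r) := by
  rw [Metric.tendsto_atTop]
  intro ε hε
  obtain ⟨δ, hδpos, hδ⟩ := hf (ε/4) (by linarith)
  obtain ⟨K1, hK1⟩ := hconv δ hδpos
  obtain ⟨K2, hK2⟩ := hσ (ε/4) (by linarith)
  refine ⟨max K1 K2, fun k hk => ?_⟩
  obtain ⟨ρ, hρ⟩ := hAkfin k
  have hdh := hK1 k (le_trans (le_max_left _ _) hk)
  rw [DH, max_lt_iff] at hdh
  have h1 : ρ ≤ r + ε/4 := key_inf_le d f (ε/4) δ hδ A (Ak k) r ρ hr hρ hdh.1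
  have h2 : r ≤ ρ + ε/4 := key_inf_le d f (ε/4) δ hδ (Ak k) A ρ r hρ hr hdh.2
  have h3 := hK2 k (le_trans (le_max_right _ _) hk)
  rw [hρ, EReal.toReal_coe] at h3
  rw [Real.dist_eq, abs_lt]
  have := abs_lt.mp h3
  constructor <;> linarith
end
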